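/- arXiv:1602.03794 — 6 statements merged into one kernel-verified Lean document; each statement's English description precedes it below -/
import Mathlib

section
/- Let λ > 0, let f : ℝ → ℝ be twice continuously differentiable in a neighborhood of a point t, and assume f(t) ≠ 0. Then the limit as Δ → 0⁺ of [e^{−λΔ}(2f(t) − f(t−Δ) − f(t+Δ)) + (1 − e^{−λΔ})² f(t)] / [(1 − e^{−2λΔ}) Δ f(t)] equals −(f''(t) − λ² f(t)) / (2λ f(t)). -/
open Filter Topology

/-!
After division of numerator and denominator by `Δ²`, the weight is a rational expression in
`e^{-λΔ} → 1`, `(1 - e^{-λΔ})/Δ → λ`, `(1 - e^{-2λΔ})/Δ → 2λ` and the symmetric second difference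
quotient `(f(t+Δ) + f(t-Δ) - 2f(t))/Δ² → f''(t)`. The last limit follows from L'Hôpital's rule,
which reduces it to the symmetric difference quotient of `f'` at `t`.
-/

theorem HasDerivAt.tendsto_symmetric_slope_zero {φ : ℝ → ℝ} {φ' t : ℝ} (h : HasDerivAt φ φ' t) :
    Tendsto (fun Δ => (φ (t + Δ) - φ (t - Δ)) / (2 * Δ)) (𝓝[≠] 0) (𝓝 φ') := by
  have hneg : Tendsto (fun Δ : ℝ => -Δ) (𝓝[≠] 0) (𝓝[≠] 0) := by
    have h := neg_nhdsNE (a := (0 : ℝ))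
    rw [neg_zero] at h
    exact h.le
  have hsum := (h.tendsto_slope_zero.add (h.tendsto_slope_zero.comp hneg)).div_const 2
  rw [add_self_div_two] at hsum
  refine hsum.congr' ?_
  filter_upwards [self_mem_nhdsWithin] with Δ (hΔ : Δ ≠ 0)
  simp only [Function.comp_apply, smul_eq_mul, ← sub_eq_add_neg]
  field_simp
  ring

theorem tendsto_symm_second_diff_quotient {f : ℝ → ℝ} {t f'' : ℝ}
    (hf : ∀ᶠ y in 𝓝 t, DifferentiableAt ℝ f y) (hf'' : HasDerivAt (deriv f) f'' t) :
    Tendsto (fun Δ => (f (t + Δ) + f (t - Δ) - 2 * f t) / Δ ^ 2) (𝓝[≠] 0) (𝓝 f'') := by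
  have hderiv : ∀ᶠ Δ in 𝓝 (0 : ℝ), HasDerivAt (fun Δ => f (t + Δ) + f (t - Δ) - 2 * f t)
      (deriv f (t + Δ) - deriv f (t - Δ)) Δ := by
    have hplus : Tendsto (t + ·) (𝓝 (0 : ℝ)) (𝓝 t) := by
      simpa using (continuous_const_add t).tendsto 0
    have hminus : Tendsto (t - ·) (𝓝 (0 : ℝ)) (𝓝 t) := by
      simpa using (continuous_sub_left t).tendsto 0
    filter_upwards [hplus.eventually hf, hminus.eventually hf] with Δ hp hm
    simpa [sub_eq_add_neg] using ((hp.hasDerivAt.comp_const_add t Δ).add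
      (hm.hasDerivAt.comp_const_sub t Δ)).sub_const (2 * f t)
  have hzero : Tendsto (fun Δ => f (t + Δ) + f (t - Δ) - 2 * f t) (𝓝[≠] 0) (𝓝 0) := by
    have := hderiv.self_of_nhds.continuousAt.tendsto
    simp only [add_zero, sub_zero] at this
    rw [show f t + f t - 2 * f t = 0 by ring] at this
    exact this.mono_left nhdsWithin_le_nhds
  refine HasDerivAt.lhopital_zero_nhdsNE (g' := fun Δ => 2 * Δ)
    (eventually_nhdsWithin_of_eventually_nhds hderiv)
    (.of_forall fun Δ => by simpa using hasDerivAt_pow 2 Δ) ?_ hzero ?_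
    hf''.tendsto_symmetric_slope_zero
  · filter_upwards [self_mem_nhdsWithin] with Δ (hΔ : Δ ≠ 0)
    positivity
  · exact ((continuous_pow 2).tendsto' 0 0 (by simp)).mono_left nhdsWithin_le_nhds

theorem tendsto_one_sub_exp_neg_mul_div (μ : ℝ) :
    Tendsto (fun Δ => (1 - Real.exp (-μ * Δ)) / Δ) (𝓝[≠] 0) (𝓝 μ) := by
  have h : HasDerivAt (fun Δ => 1 - Real.exp (-μ * Δ)) μ 0 := by
    simpa using (((hasDerivAt_id (0 : ℝ)).const_mul (-μ)).exp).const_sub 1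
  simpa [div_eq_inv_mul] using h.tendsto_slope_zero

/-- Limit of the normalized interior AR(1) optimal weight: with `a = e^{-λΔ}`,
`[a(2f(t) - f(t-Δ) - f(t+Δ)) + (1-a)² f(t)] / [(1-a²) Δ f(t)]` tends to the signed
design density `p(t) = -(f''(t) - λ² f(t)) / (2λ f(t))` as `Δ → 0⁺`. -/
theorem ar1_interior_weight_limit (lam : ℝ) (hlam : 0 < lam)
    (f : ℝ → ℝ) (t : ℝ) (hf : ContDiffAt ℝ 2 f t) (hft : f t ≠ 0) :
    Tendsto (fun Δ : ℝ =>
        (Real.exp (-lam * Δ) * (2 * f t - f (t - Δ) - f (t + Δ))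
          + (1 - Real.exp (-lam * Δ)) ^ 2 * f t)
        / ((1 - Real.exp (-2 * lam * Δ)) * Δ * f t))
      (nhdsWithin 0 (Set.Ioi 0))
      (nhds (-(deriv (deriv f) t - lam ^ 2 * f t) / (2 * lam * f t))) := by
  have hdiff : ∀ᶠ y in 𝓝 t, DifferentiableAt ℝ f y :=
    (hf.eventually (by simp)).mono fun y hy => hy.differentiableAt (by simp)
  have hf'' : HasDerivAt (deriv f) (deriv (deriv f) t) t :=
    ((hf.derivWithin (m := 1) le_rfl).differentiableAt one_ne_zero).hasDerivAt
  have hexp : Tendsto (fun Δ => Real.exp (-lam * Δ)) (𝓝[≠] 0) (𝓝 1) :=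
    ((Continuous.tendsto' (by fun_prop) 0 1 (by simp))).mono_left nhdsWithin_le_nhds
  have hexp2 := tendsto_one_sub_exp_neg_mul_div (2 * lam)
  simp only [neg_mul] at hexp2
  have hlim := ((hexp.mul (tendsto_symm_second_diff_quotient hdiff hf'')).neg.add
    (((tendsto_one_sub_exp_neg_mul_div lam).pow 2).mul_const (f t))).div
    (hexp2.mul_const (f t)) (mul_ne_zero (by positivity) hft)
  convert (hlim.mono_left (nhdsGT_le_nhdsNE 0)).congr' ?_ using 2
  · ring
  · filter_upwards [self_mem_nhdsWithin] with Δ (hΔ : 0 < Δ)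
    simp only [Pi.div_apply, neg_mul]
    have hden : 1 - Real.exp (-(2 * lam * Δ)) ≠ 0 :=
      (sub_pos.mpr (Real.exp_lt_one_iff.mpr (by nlinarith))).ne'
    field_simp
    ring
end

section
/- Let λ > 0 and A < B, and let f : ℝ → ℝ be differentiable at A and B with f(A) ≠ 0 and f(B) ≠ 0. Then lim_{Δ→0⁺} (f(A) − e^{−λΔ} f(A+Δ)) / [(1 − e^{−2λΔ}) f(A)] = (−f'(A) + λ f(A)) / (2λ f(A)), and lim_{Δ→0⁺} (f(B) − e^{−λΔ} f(B−Δ)) / [(1 − e^{−2λΔ}) f(B)] = (f'(B) + λ f(B)) / (2λ f(B)). -/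
open Filter Topology

/-!
Both weights are `0/0` quotients at `Δ = 0`: numerator and denominator vanish there and are
differentiable in `Δ`, the numerator with derivative `∓f'(x) + λ f(x)` and the denominator with
derivative `2λ f(x) ≠ 0`, so the limit is the quotient of the derivatives.
-/

/-- Off `a` the quotient `g / h` equals the quotient of the slopes of `g` and `h` at `a`. -/
theorem tendsto_div_nhdsNE_of_hasDerivAt {𝕜 : Type*} [NontriviallyNormedField 𝕜]
    {g h : 𝕜 → 𝕜} {a g' h' : 𝕜}
    (hg : HasDerivAt g g' a) (hh : HasDerivAt h h' a) (hga : g a = 0) (hha : h a = 0)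
    (hh' : h' ≠ 0) :
    Tendsto (fun x => g x / h x) (𝓝[≠] a) (𝓝 (g' / h')) := by
  refine ((hasDerivAt_iff_tendsto_slope.mp hg).div
    (hasDerivAt_iff_tendsto_slope.mp hh) hh').congr' ?_
  filter_upwards [self_mem_nhdsWithin] with x hx
  have hxa : (x - a)⁻¹ ≠ 0 := inv_ne_zero (sub_ne_zero.mpr hx)
  simp only [Pi.div_apply, slope_def_module, hga, hha, sub_zero, smul_eq_mul,
    mul_div_mul_left _ _ hxa]

theorem hasDerivAt_ar1_numerator (lam s : ℝ) {f : ℝ → ℝ} {x f' : ℝ} (hf : HasDerivAt f f' x) :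
    HasDerivAt (fun Δ : ℝ => f x - Real.exp (-lam * Δ) * f (x + s * Δ))
      (-s * f' + lam * f x) 0 := by
  have hexp : HasDerivAt (fun Δ : ℝ => Real.exp (-lam * Δ)) (-lam) 0 := by
    simpa using ((hasDerivAt_id (0 : ℝ)).const_mul (-lam)).exp
  have hshift : HasDerivAt (fun Δ : ℝ => f (x + s * Δ)) (f' * s) 0 := by
    have hlin : HasDerivAt (fun Δ : ℝ => x + s * Δ) s 0 := by
      simpa using ((hasDerivAt_id (0 : ℝ)).const_mul s).const_add x
    exact hf.comp_of_eq 0 hlin (by simp)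
  refine ((hexp.mul hshift).const_sub (f x)).congr_deriv ?_
  simp only [mul_zero, add_zero, Real.exp_zero, one_mul]
  ring

theorem hasDerivAt_ar1_denominator (lam c : ℝ) :
    HasDerivAt (fun Δ : ℝ => (1 - Real.exp (-2 * lam * Δ)) * c) (2 * lam * c) 0 := by
  have hexp : HasDerivAt (fun Δ : ℝ => Real.exp (-2 * lam * Δ)) (-2 * lam) 0 := by
    simpa using ((hasDerivAt_id (0 : ℝ)).const_mul (-2 * lam)).exp
  exact ((hexp.const_sub 1).mul_const c).congr_deriv (by ring)

theorem tendsto_ar1_boundary_weight {lam : ℝ} (hlam : lam ≠ 0) (s : ℝ) {f : ℝ → ℝ} {x : ℝ}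
    (hf : DifferentiableAt ℝ f x) (hx : f x ≠ 0) :
    Tendsto (fun Δ : ℝ =>
        (f x - Real.exp (-lam * Δ) * f (x + s * Δ)) / ((1 - Real.exp (-2 * lam * Δ)) * f x))
      (𝓝[>] 0) (𝓝 ((-s * deriv f x + lam * f x) / (2 * lam * f x))) :=
  (tendsto_div_nhdsNE_of_hasDerivAt (hasDerivAt_ar1_numerator lam s hf.hasDerivAt)
    (hasDerivAt_ar1_denominator lam (f x)) (by simp) (by simp)
    (mul_ne_zero (mul_ne_zero two_ne_zero hlam) hx)).mono_left (nhdsGT_le_nhdsNE 0)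

theorem ar1_boundary_weight_limits_general (lam : ℝ) (hlam : 0 < lam)
    (A B : ℝ) (f : ℝ → ℝ)
    (hfA : DifferentiableAt ℝ f A) (hfB : DifferentiableAt ℝ f B)
    (hA0 : f A ≠ 0) (hB0 : f B ≠ 0) :
    Tendsto (fun Δ : ℝ =>
        (f A - Real.exp (-lam * Δ) * f (A + Δ)) / ((1 - Real.exp (-2 * lam * Δ)) * f A))
      (nhdsWithin 0 (Set.Ioi 0))
      (nhds ((-deriv f A + lam * f A) / (2 * lam * f A))) ∧
    Tendsto (fun Δ : ℝ =>
        (f B - Real.exp (-lam * Δ) * f (B - Δ)) / ((1 - Real.exp (-2 * lam * Δ)) * f B))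
      (nhdsWithin 0 (Set.Ioi 0))
      (nhds ((deriv f B + lam * f B) / (2 * lam * f B))) :=
  ⟨by simpa using tendsto_ar1_boundary_weight hlam.ne' 1 hfA hA0,
    by simpa [← sub_eq_add_neg] using tendsto_ar1_boundary_weight hlam.ne' (-1) hfB hB0⟩

/-- Limits of the AR(1) optimal boundary weights: with `a = e^{-λΔ}`,
`(f(A) - a f(A+Δ)) / ((1-a²) f(A)) → P_A = (-f'(A) + λ f(A))/(2λ f(A))` and
`(f(B) - a f(B-Δ)) / ((1-a²) f(B)) → P_B = (f'(B) + λ f(B))/(2λ f(B))` as `Δ → 0⁺`. -/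
theorem ar1_boundary_weight_limits (lam : ℝ) (hlam : 0 < lam)
    (A B : ℝ) (hAB : A < B) (f : ℝ → ℝ)
    (hfA : DifferentiableAt ℝ f A) (hfB : DifferentiableAt ℝ f B)
    (hA0 : f A ≠ 0) (hB0 : f B ≠ 0) :
    Tendsto (fun Δ : ℝ =>
        (f A - Real.exp (-lam * Δ) * f (A + Δ)) / ((1 - Real.exp (-2 * lam * Δ)) * f A))
      (nhdsWithin 0 (Set.Ioi 0))
      (nhds ((-deriv f A + lam * f A) / (2 * lam * f A))) ∧
    Tendsto (fun Δ : ℝ =>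
        (f B - Real.exp (-lam * Δ) * f (B - Δ)) / ((1 - Real.exp (-2 * lam * Δ)) * f B))
      (nhdsWithin 0 (Set.Ioi 0))
      (nhds ((deriv f B + lam * f B) / (2 * lam * f B))) :=
  ar1_boundary_weight_limits_general lam hlam A B f hfA hfB hA0 hB0
end

section
/- Let a₁, a₂ ∈ ℝ satisfy 1 − a₂ ≠ 0, and define the sequence (r_k)_{k≥0} by r_0 = 1, r_1 = a₁/(1 − a₂), and r_k = a₁ r_{k−1} + a₂ r_{k−2} for k ≥ 2. For N ≥ 5 let Σ be the N×N matrix with Σ_{ij} = r_{|i−j|}, and let M be the N×N symmetric five-diagonal matrix with M_{11} = M_{NN} = 1, M_{12} = M_{21} = M_{N−1,N} = M_{N,N−1} = −a₁, M_{22} = M_{N−1,N−1} = 1 + a₁², M_{ii} = 1 + a₁² + a₂² for 3 ≤ i ≤ N−2, M_{i,i+1} = M_{i+1,i} = −a₁ + a₁a₂ for 2 ≤ i ≤ N−2, M_{i,i+2} = M_{i+2,i} = −a₂ for 1 ≤ i ≤ N−2, and all other entries zero. Then Σ · M = S · I_N, where S = (1 + a₁ − a₂)(1 − a₁ − a₂)(1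 + a₂)/(1 − a₂). -/
set_option linter.unreachableTactic false
set_option linter.unusedTactic false
set_option linter.unusedVariables false

open Matrix

private def Fx (N : ℕ) (f : Fin N → ℝ) (m : ℤ) : ℝ :=
  if h : 0 ≤ m ∧ m < (N:ℤ) then f ⟨m.toNat, by omega⟩ else 0

private lemma Fx_of_mem {N : ℕ} (f : Fin N → ℝ) {m : ℤ} (h1 : 0 ≤ m) (h2 : m < (N:ℤ)) :
    Fx N f m = f ⟨m.toNat, by omega⟩ := dif_pos ⟨h1, h2⟩

private lemma Fx_of_not {N : ℕ} (f : Fin N → ℝ) (m : ℤ) (h : m < 0 ∨ (N:ℤ) ≤ m) :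
    Fx N f m = 0 := dif_neg (by omega)

private lemma Fx_coe {N : ℕ} (f : Fin N → ℝ) (k : Fin N) : Fx N f (k:ℤ) = f k := by
  rw [Fx, dif_pos ⟨by positivity, by exact_mod_cast k.isLt⟩]
  congr 1

private lemma sum_five {N : ℕ} (f : Fin N → ℝ) (j : ℤ)
    (hs : ∀ k : Fin N, 3 ≤ ((k:ℤ) - j).natAbs → f k = 0) :
    ∑ k, f k = Fx N f (j-2) + Fx N f (j-1) + Fx N f j + Fx N f (j+1) + Fx N f (j+2) := by
  classical
  have hinj : Function.Injective (fun k : Fin N => (k:ℤ)) := by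
    intro a b h
    ext
    have h' : ((a:ℕ):ℤ) = ((b:ℕ):ℤ) := h
    exact_mod_cast h'
  set A : Finset ℤ := Finset.univ.image (fun k : Fin N => (k:ℤ)) with hA
  have hmemA : ∀ m : ℤ, m ∈ A ↔ (0 ≤ m ∧ m < (N:ℤ)) := by
    intro m
    simp only [hA, Finset.mem_image, Finset.mem_univ, true_and]
    constructor
    · rintro ⟨k, rfl⟩; exact ⟨by positivity, by exact_mod_cast k.isLt⟩
    · rintro ⟨h1, h2⟩; exact ⟨⟨m.toNat, by omega⟩, by simp only [Fin.val_mk]; omega⟩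
  have h1 : ∑ k : Fin N, f k = ∑ m ∈ A, Fx N f m := by
    rw [hA, Finset.sum_image (fun a _ b _ h => hinj h)]
    exact Finset.sum_congr rfl (fun k _ => (Fx_coe f k).symm)
  set B : Finset ℤ := Finset.Icc (j-2) (j+2) with hB
  have h2 : ∑ m ∈ A, Fx N f m = ∑ m ∈ A ∩ B, Fx N f m := by
    refine (Finset.sum_subset (Finset.inter_subset_left) ?_).symm
    intro m hm hnm
    have hmB : m ∉ B := fun h => hnm (Finset.mem_inter.mpr ⟨hm, h⟩)
    rw [hB, Finset.mem_Icc] at hmB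
    have hm' := (hmemA m).mp hm
    rw [Fx_of_mem f hm'.1 hm'.2]
    apply hs
    simp only [Fin.val_mk]
    omega
  have h3 : ∑ m ∈ A ∩ B, Fx N f m = ∑ m ∈ B, Fx N f m := by
    refine Finset.sum_subset (Finset.inter_subset_right) ?_
    intro m hm hnm
    have : m ∉ A := fun h => hnm (Finset.mem_inter.mpr ⟨h, hm⟩)
    rw [hmemA] at this
    exact Fx_of_not f m (by omega)
  have hBeq : B = {j-2, j-1, j, j+1, j+2} := by
    ext x; simp [hB, Finset.mem_Icc]; omega
  rw [h1, h2, h3, hBeq]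
  rw [Finset.sum_insert (by simp only [Finset.mem_insert, Finset.mem_singleton]; omega),
    Finset.sum_insert (by simp only [Finset.mem_insert, Finset.mem_singleton]; omega),
    Finset.sum_insert (by simp only [Finset.mem_insert, Finset.mem_singleton]; omega),
    Finset.sum_insert (by simp only [Finset.mem_insert, Finset.mem_singleton]; omega),
    Finset.sum_singleton]
  ring

set_option maxHeartbeats 2000000 in
/-- For the AR(2) autocovariance sequence `r` (given by the Yule–Walker recursion), the
covariance matrix `Σᵢⱼ = r_{|i-j|}` multiplied by the symmetric five-diagonal matrix `M`
equals `S·I`, where `S = (1 + a₁ - a₂)(1 - a₁ - a₂)(1 + a₂)/(1 - a₂)`. -/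
theorem ar2_inverse_covariance {N : ℕ} (hN : 5 ≤ N)
    (a₁ a₂ : ℝ) (ha : 1 - a₂ ≠ 0)
    (r : ℕ → ℝ) (hr0 : r 0 = 1) (hr1 : r 1 = a₁ / (1 - a₂))
    (hrec : ∀ k, r (k + 2) = a₁ * r (k + 1) + a₂ * r k)
    (V M : Matrix (Fin N) (Fin N) ℝ)
    (hV : ∀ i j : Fin N, V i j = r ((i : ℤ) - (j : ℤ)).natAbs)
    (hM : ∀ i j : Fin N, M i j =
      if (i : ℕ) = (j : ℕ) then
        (if (i : ℕ) = 0 ∨ (i : ℕ) = N - 1 then 1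
         else if (i : ℕ) = 1 ∨ (i : ℕ) = N - 2 then 1 + a₁ ^ 2
         else 1 + a₁ ^ 2 + a₂ ^ 2)
      else if ((i : ℤ) - (j : ℤ)).natAbs = 1 then
        (if min (i : ℕ) (j : ℕ) = 0 ∨ max (i : ℕ) (j : ℕ) = N - 1 then -a₁
         else -a₁ + a₁ * a₂)
      else if ((i : ℤ) - (j : ℤ)).natAbs = 2 then -a₂
      else 0) :
    V * M = ((1 + a₁ - a₂) * (1 - a₁ - a₂) * (1 + a₂) / (1 - a₂)) •
      (1 : Matrix (Fin N) (Fin N) ℝ) := by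
  ext i j
  have hi := i.isLt
  have hj := j.isLt
  have hsupp : ∀ k : Fin N, 3 ≤ ((k:ℤ) - ((j:ℤ))).natAbs → V i k * M k j = 0 := by
    intro k hk
    rw [hM, if_neg (by omega), if_neg (by omega), if_neg (by omega), mul_zero]
  have hS := sum_five (fun k => V i k * M k j) ((j:ℤ)) hsupp
  have hone : ((((1 + a₁ - a₂) * (1 - a₁ - a₂) * (1 + a₂) / (1 - a₂)) •
      (1 : Matrix (Fin N) (Fin N) ℝ)) i j)
      = ((1 + a₁ - a₂) * (1 - a₁ - a₂) * (1 + a₂) / (1 - a₂)) *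
        (if (i : ℕ) = (j : ℕ) then 1 else 0) := by
    rw [Matrix.smul_apply, Matrix.one_apply, smul_eq_mul]
    congr 1
    simp [Fin.ext_iff]
  have key : ∀ m : ℤ, 0 ≤ m → m < (N:ℤ) →
      Fx N (fun k => V i k * M k j) m =
      r ((i:ℤ) - m).natAbs *
        (if m.toNat = (j : ℕ) then
          (if m.toNat = 0 ∨ m.toNat = N - 1 then 1
           else if m.toNat = 1 ∨ m.toNat = N - 2 then 1 + a₁ ^ 2
           else 1 + a₁ ^ 2 + a₂ ^ 2)
         else if (m - (j:ℤ)).natAbs = 1 then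
          (if min m.toNat (j : ℕ) = 0 ∨ max m.toNat (j : ℕ) = N - 1 then -a₁
           else -a₁ + a₁ * a₂)
         else if (m - (j:ℤ)).natAbs = 2 then -a₂
         else 0) := by
    intro m h1 h2
    rw [Fx_of_mem _ h1 h2]
    show V i _ * M _ j = _
    rw [hV, hM]
    simp only [Fin.val_mk]
    have hmm : ((m.toNat : ℕ) : ℤ) = m := by omega
    simp only [hmm]
  have key2 : ∀ m : ℤ, 0 ≤ m → m < (N:ℤ) → ∀ c : ℝ,
      ((if m.toNat = (j : ℕ) then
          (if m.toNat = 0 ∨ m.toNat = N - 1 then 1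
           else if m.toNat = 1 ∨ m.toNat = N - 2 then 1 + a₁ ^ 2
           else 1 + a₁ ^ 2 + a₂ ^ 2)
         else if (m - (j:ℤ)).natAbs = 1 then
          (if min m.toNat (j : ℕ) = 0 ∨ max m.toNat (j : ℕ) = N - 1 then -a₁
           else -a₁ + a₁ * a₂)
         else if (m - (j:ℤ)).natAbs = 2 then -a₂
         else 0 : ℝ) = c) →
      Fx N (fun k => V i k * M k j) m = r ((i:ℤ) - m).natAbs * c := by
    intro m h1 h2 c hc
    rw [key m h1 h2, hc]
  rw [Matrix.mul_apply, hS, hone]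
  by_cases hj0 : (j:ℕ) = 0
  · rw [Fx_of_not (fun k => V i k * M k j) ((j:ℤ) - 2) (by omega),
        Fx_of_not (fun k => V i k * M k j) ((j:ℤ) - 1) (by omega),
        key2 ((j:ℤ)) (by omega) (by omega) ((1:ℝ)) (by rw [if_pos (by omega : (((j:ℤ))).toNat = (j:ℕ)), if_pos (by omega : (((j:ℤ))).toNat = 0 ∨ (((j:ℤ))).toNat = N - 1)]),
        key2 ((j:ℤ) + 1) (by omega) (by omega) (-a₁) (by rw [if_neg (by omega : ¬ ((((j:ℤ) + 1)).toNat = (j:ℕ))), if_pos (by omega : ((((j:ℤ) + 1)) - ((j:ℤ))).natAbs = 1), if_pos (by omega : min (((j:ℤ) + 1)).toNat (j:ℕ) = 0 ∨ max (((j:ℤ) + 1)).toNat (j:ℕ) = N - 1)]),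
        key2 ((j:ℤ) + 2) (by omega) (by omega) (-a₂) (by rw [if_neg (by omega : ¬ ((((j:ℤ) + 2)).toNat = (j:ℕ))), if_neg (by omega : ¬ (((((j:ℤ) + 2)) - ((j:ℤ))).natAbs = 1)), if_pos (by omega : ((((j:ℤ) + 2)) - ((j:ℤ))).natAbs = 2)])]
    by_cases hi0 : (i:ℕ) = 0
    · rw [if_pos (by omega : (i:ℕ) = (j:ℕ)),
            (by omega : ((i:ℤ) - ((j:ℤ))).natAbs = 0),
            (by omega : ((i:ℤ) - ((j:ℤ) + 1)).natAbs = 1),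
            (by omega : ((i:ℤ) - ((j:ℤ) + 2)).natAbs = 2)]
      have g2 : r 2 = a₁ * r 1 + a₂ * r 0 := hrec 0
      rw [g2, hr0, hr1]
      first
      | (field_simp
         ring)
      | field_simp
      | ring
    · by_cases hi1 : (i:ℕ) = 1
      · rw [if_neg (by omega : ¬ (i:ℕ) = (j:ℕ)),
              (by omega : ((i:ℤ) - ((j:ℤ))).natAbs = 1),
              (by omega : ((i:ℤ) - ((j:ℤ) + 1)).natAbs = 0),
              (by omega : ((i:ℤ) - ((j:ℤ) + 2)).natAbs = 1)]
        rw [hr0, hr1]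
        first
        | (field_simp
           ring)
        | field_simp
        | ring
      · obtain ⟨e, he⟩ : ∃ e, (i:ℕ) = 2 + e := ⟨(i:ℕ) - 2, by omega⟩
        rw [if_neg (by omega : ¬ (i:ℕ) = (j:ℕ)),
              (by omega : ((i:ℤ) - ((j:ℤ))).natAbs = e + 2),
              (by omega : ((i:ℤ) - ((j:ℤ) + 1)).natAbs = e + 1),
              (by omega : ((i:ℤ) - ((j:ℤ) + 2)).natAbs = e)]
        have g2 : r (e + 2) = a₁ * r (e + 1) + a₂ * r e := hrec e
        rw [g2]
        ring
  by_cases hj1 : (j:ℕ) = 1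
  · rw [Fx_of_not (fun k => V i k * M k j) ((j:ℤ) - 2) (by omega),
        key2 ((j:ℤ) - 1) (by omega) (by omega) (-a₁) (by rw [if_neg (by omega : ¬ ((((j:ℤ) - 1)).toNat = (j:ℕ))), if_pos (by omega : ((((j:ℤ) - 1)) - ((j:ℤ))).natAbs = 1), if_pos (by omega : min (((j:ℤ) - 1)).toNat (j:ℕ) = 0 ∨ max (((j:ℤ) - 1)).toNat (j:ℕ) = N - 1)]),
        key2 ((j:ℤ)) (by omega) (by omega) (1 + a₁ ^ 2) (by rw [if_pos (by omega : (((j:ℤ))).toNat = (j:ℕ)), if_neg (by omega : ¬ ((((j:ℤ))).toNat = 0 ∨ (((j:ℤ))).toNat = N - 1)), if_pos (by omega : (((j:ℤ))).toNat = 1 ∨ (((j:ℤ))).toNat = N - 2)]),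
        key2 ((j:ℤ) + 1) (by omega) (by omega) (-a₁ + a₁ * a₂) (by rw [if_neg (by omega : ¬ ((((j:ℤ) + 1)).toNat = (j:ℕ))), if_pos (by omega : ((((j:ℤ) + 1)) - ((j:ℤ))).natAbs = 1), if_neg (by omega : ¬ (min (((j:ℤ) + 1)).toNat (j:ℕ) = 0 ∨ max (((j:ℤ) + 1)).toNat (j:ℕ) = N - 1))]),
        key2 ((j:ℤ) + 2) (by omega) (by omega) (-a₂) (by rw [if_neg (by omega : ¬ ((((j:ℤ) + 2)).toNat = (j:ℕ))), if_neg (by omega : ¬ (((((j:ℤ) + 2)) - ((j:ℤ))).natAbs = 1)), if_pos (by omega : ((((j:ℤ) + 2)) - ((j:ℤ))).natAbs = 2)])]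
    by_cases hi0 : (i:ℕ) = 0
    · rw [if_neg (by omega : ¬ (i:ℕ) = (j:ℕ)),
            (by omega : ((i:ℤ) - ((j:ℤ) - 1)).natAbs = 0),
            (by omega : ((i:ℤ) - ((j:ℤ))).natAbs = 1),
            (by omega : ((i:ℤ) - ((j:ℤ) + 1)).natAbs = 2),
            (by omega : ((i:ℤ) - ((j:ℤ) + 2)).natAbs = 3)]
      have g2 : r 2 = a₁ * r 1 + a₂ * r 0 := hrec 0
      have g3 : r 3 = a₁ * r 2 + a₂ * r 1 := hrec 1
      rw [g3, g2, hr0, hr1]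
      first
      | (field_simp
         ring)
      | field_simp
      | ring
    · by_cases hi1 : (i:ℕ) = 1
      · rw [if_pos (by omega : (i:ℕ) = (j:ℕ)),
              (by omega : ((i:ℤ) - ((j:ℤ) - 1)).natAbs = 1),
              (by omega : ((i:ℤ) - ((j:ℤ))).natAbs = 0),
              (by omega : ((i:ℤ) - ((j:ℤ) + 1)).natAbs = 1),
              (by omega : ((i:ℤ) - ((j:ℤ) + 2)).natAbs = 2)]
        have g2 : r 2 = a₁ * r 1 + a₂ * r 0 := hrec 0
        rw [g2, hr0, hr1]
        first
        | (field_simp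
           ring)
        | field_simp
        | ring
      · by_cases hi2 : (i:ℕ) = 2
        · rw [if_neg (by omega : ¬ (i:ℕ) = (j:ℕ)),
                (by omega : ((i:ℤ) - ((j:ℤ) - 1)).natAbs = 2),
                (by omega : ((i:ℤ) - ((j:ℤ))).natAbs = 1),
                (by omega : ((i:ℤ) - ((j:ℤ) + 1)).natAbs = 0),
                (by omega : ((i:ℤ) - ((j:ℤ) + 2)).natAbs = 1)]
          have g2 : r 2 = a₁ * r 1 + a₂ * r 0 := hrec 0
          rw [g2, hr0, hr1]
          first
          | (field_simp
             ring)
          | field_simp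
          | ring
        · obtain ⟨e, he⟩ : ∃ e, (i:ℕ) = 3 + e := ⟨(i:ℕ) - 3, by omega⟩
          rw [if_neg (by omega : ¬ (i:ℕ) = (j:ℕ)),
                (by omega : ((i:ℤ) - ((j:ℤ) - 1)).natAbs = e + 3),
                (by omega : ((i:ℤ) - ((j:ℤ))).natAbs = e + 2),
                (by omega : ((i:ℤ) - ((j:ℤ) + 1)).natAbs = e + 1),
                (by omega : ((i:ℤ) - ((j:ℤ) + 2)).natAbs = e)]
          have g2 : r (e + 2) = a₁ * r (e + 1) + a₂ * r e := hrec e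
          have g3 : r (e + 3) = a₁ * r (e + 2) + a₂ * r (e + 1) := hrec (e + 1)
          rw [g3, g2]
          ring
  by_cases hjN1 : (j:ℕ) = N - 1
  · rw [Fx_of_not (fun k => V i k * M k j) ((j:ℤ) + 1) (by omega),
        Fx_of_not (fun k => V i k * M k j) ((j:ℤ) + 2) (by omega),
        key2 ((j:ℤ) - 2) (by omega) (by omega) (-a₂) (by rw [if_neg (by omega : ¬ ((((j:ℤ) - 2)).toNat = (j:ℕ))), if_neg (by omega : ¬ (((((j:ℤ) - 2)) - ((j:ℤ))).natAbs = 1)), if_pos (by omega : ((((j:ℤ) - 2)) - ((j:ℤ))).natAbs = 2)]),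
        key2 ((j:ℤ) - 1) (by omega) (by omega) (-a₁) (by rw [if_neg (by omega : ¬ ((((j:ℤ) - 1)).toNat = (j:ℕ))), if_pos (by omega : ((((j:ℤ) - 1)) - ((j:ℤ))).natAbs = 1), if_pos (by omega : min (((j:ℤ) - 1)).toNat (j:ℕ) = 0 ∨ max (((j:ℤ) - 1)).toNat (j:ℕ) = N - 1)]),
        key2 ((j:ℤ)) (by omega) (by omega) ((1:ℝ)) (by rw [if_pos (by omega : (((j:ℤ))).toNat = (j:ℕ)), if_pos (by omega : (((j:ℤ))).toNat = 0 ∨ (((j:ℤ))).toNat = N - 1)])]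
    by_cases hiN1 : (i:ℕ) = N - 1
    · rw [if_pos (by omega : (i:ℕ) = (j:ℕ)),
            (by omega : ((i:ℤ) - ((j:ℤ) - 2)).natAbs = 2),
            (by omega : ((i:ℤ) - ((j:ℤ) - 1)).natAbs = 1),
            (by omega : ((i:ℤ) - ((j:ℤ))).natAbs = 0)]
      have g2 : r 2 = a₁ * r 1 + a₂ * r 0 := hrec 0
      rw [g2, hr0, hr1]
      first
      | (field_simp
         ring)
      | field_simp
      | ring
    · by_cases hiN2 : (i:ℕ) = N - 2
      · rw [if_neg (by omega : ¬ (i:ℕ) = (j:ℕ)),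
              (by omega : ((i:ℤ) - ((j:ℤ) - 2)).natAbs = 1),
              (by omega : ((i:ℤ) - ((j:ℤ) - 1)).natAbs = 0),
              (by omega : ((i:ℤ) - ((j:ℤ))).natAbs = 1)]
        rw [hr0, hr1]
        first
        | (field_simp
           ring)
        | field_simp
        | ring
      · obtain ⟨e, he⟩ : ∃ e, (j:ℕ) = (i:ℕ) + 2 + e := ⟨(j:ℕ) - (i:ℕ) - 2, by omega⟩
        rw [if_neg (by omega : ¬ (i:ℕ) = (j:ℕ)),
              (by omega : ((i:ℤ) - ((j:ℤ) - 2)).natAbs = e),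
              (by omega : ((i:ℤ) - ((j:ℤ) - 1)).natAbs = e + 1),
              (by omega : ((i:ℤ) - ((j:ℤ))).natAbs = e + 2)]
        have g2 : r (e + 2) = a₁ * r (e + 1) + a₂ * r e := hrec e
        rw [g2]
        ring
  by_cases hjN2 : (j:ℕ) = N - 2
  · rw [Fx_of_not (fun k => V i k * M k j) ((j:ℤ) + 2) (by omega),
        key2 ((j:ℤ) - 2) (by omega) (by omega) (-a₂) (by rw [if_neg (by omega : ¬ ((((j:ℤ) - 2)).toNat = (j:ℕ))), if_neg (by omega : ¬ (((((j:ℤ) - 2)) - ((j:ℤ))).natAbs = 1)), if_pos (by omega : ((((j:ℤ) - 2)) - ((j:ℤ))).natAbs = 2)]),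
        key2 ((j:ℤ) - 1) (by omega) (by omega) (-a₁ + a₁ * a₂) (by rw [if_neg (by omega : ¬ ((((j:ℤ) - 1)).toNat = (j:ℕ))), if_pos (by omega : ((((j:ℤ) - 1)) - ((j:ℤ))).natAbs = 1), if_neg (by omega : ¬ (min (((j:ℤ) - 1)).toNat (j:ℕ) = 0 ∨ max (((j:ℤ) - 1)).toNat (j:ℕ) = N - 1))]),
        key2 ((j:ℤ)) (by omega) (by omega) (1 + a₁ ^ 2) (by rw [if_pos (by omega : (((j:ℤ))).toNat = (j:ℕ)), if_neg (by omega : ¬ ((((j:ℤ))).toNat = 0 ∨ (((j:ℤ))).toNat = N - 1)), if_pos (by omega : (((j:ℤ))).toNat = 1 ∨ (((j:ℤ))).toNat = N - 2)]),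
        key2 ((j:ℤ) + 1) (by omega) (by omega) (-a₁) (by rw [if_neg (by omega : ¬ ((((j:ℤ) + 1)).toNat = (j:ℕ))), if_pos (by omega : ((((j:ℤ) + 1)) - ((j:ℤ))).natAbs = 1), if_pos (by omega : min (((j:ℤ) + 1)).toNat (j:ℕ) = 0 ∨ max (((j:ℤ) + 1)).toNat (j:ℕ) = N - 1)])]
    by_cases hiN1 : (i:ℕ) = N - 1
    · rw [if_neg (by omega : ¬ (i:ℕ) = (j:ℕ)),
            (by omega : ((i:ℤ) - ((j:ℤ) - 2)).natAbs = 3),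
            (by omega : ((i:ℤ) - ((j:ℤ) - 1)).natAbs = 2),
            (by omega : ((i:ℤ) - ((j:ℤ))).natAbs = 1),
            (by omega : ((i:ℤ) - ((j:ℤ) + 1)).natAbs = 0)]
      have g2 : r 2 = a₁ * r 1 + a₂ * r 0 := hrec 0
      have g3 : r 3 = a₁ * r 2 + a₂ * r 1 := hrec 1
      rw [g3, g2, hr0, hr1]
      first
      | (field_simp
         ring)
      | field_simp
      | ring
    · by_cases hiN2 : (i:ℕ) = N - 2
      · rw [if_pos (by omega : (i:ℕ) = (j:ℕ)),
              (by omega : ((i:ℤ) - ((j:ℤ) - 2)).natAbs = 2),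
              (by omega : ((i:ℤ) - ((j:ℤ) - 1)).natAbs = 1),
              (by omega : ((i:ℤ) - ((j:ℤ))).natAbs = 0),
              (by omega : ((i:ℤ) - ((j:ℤ) + 1)).natAbs = 1)]
        have g2 : r 2 = a₁ * r 1 + a₂ * r 0 := hrec 0
        rw [g2, hr0, hr1]
        first
        | (field_simp
           ring)
        | field_simp
        | ring
      · by_cases hiN3 : (i:ℕ) = N - 3
        · rw [if_neg (by omega : ¬ (i:ℕ) = (j:ℕ)),
                (by omega : ((i:ℤ) - ((j:ℤ) - 2)).natAbs = 1),
                (by omega : ((i:ℤ) - ((j:ℤ) - 1)).natAbs = 0),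
                (by omega : ((i:ℤ) - ((j:ℤ))).natAbs = 1),
                (by omega : ((i:ℤ) - ((j:ℤ) + 1)).natAbs = 2)]
          have g2 : r 2 = a₁ * r 1 + a₂ * r 0 := hrec 0
          rw [g2, hr0, hr1]
          first
          | (field_simp
             ring)
          | field_simp
          | ring
        · obtain ⟨e, he⟩ : ∃ e, (j:ℕ) = (i:ℕ) + 2 + e := ⟨(j:ℕ) - (i:ℕ) - 2, by omega⟩
          rw [if_neg (by omega : ¬ (i:ℕ) = (j:ℕ)),
                (by omega : ((i:ℤ) - ((j:ℤ) - 2)).natAbs = e),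
                (by omega : ((i:ℤ) - ((j:ℤ) - 1)).natAbs = e + 1),
                (by omega : ((i:ℤ) - ((j:ℤ))).natAbs = e + 2),
                (by omega : ((i:ℤ) - ((j:ℤ) + 1)).natAbs = e + 3)]
          have g2 : r (e + 2) = a₁ * r (e + 1) + a₂ * r e := hrec e
          have g3 : r (e + 3) = a₁ * r (e + 2) + a₂ * r (e + 1) := hrec (e + 1)
          rw [g3, g2]
          ring
  · rw [key2 ((j:ℤ) - 2) (by omega) (by omega) (-a₂) (by rw [if_neg (by omega : ¬ ((((j:ℤ) - 2)).toNat = (j:ℕ))), if_neg (by omega : ¬ (((((j:ℤ) - 2)) - ((j:ℤ))).natAbs = 1)), if_pos (by omega : ((((j:ℤ) - 2)) - ((j:ℤ))).natAbs = 2)]),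
        key2 ((j:ℤ) - 1) (by omega) (by omega) (-a₁ + a₁ * a₂) (by rw [if_neg (by omega : ¬ ((((j:ℤ) - 1)).toNat = (j:ℕ))), if_pos (by omega : ((((j:ℤ) - 1)) - ((j:ℤ))).natAbs = 1), if_neg (by omega : ¬ (min (((j:ℤ) - 1)).toNat (j:ℕ) = 0 ∨ max (((j:ℤ) - 1)).toNat (j:ℕ) = N - 1))]),
        key2 ((j:ℤ)) (by omega) (by omega) (1 + a₁ ^ 2 + a₂ ^ 2) (by rw [if_pos (by omega : (((j:ℤ))).toNat = (j:ℕ)), if_neg (by omega : ¬ ((((j:ℤ))).toNat = 0 ∨ (((j:ℤ))).toNat = N - 1)), if_neg (by omega : ¬ ((((j:ℤ))).toNat = 1 ∨ (((j:ℤ))).toNat = N - 2))]),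
        key2 ((j:ℤ) + 1) (by omega) (by omega) (-a₁ + a₁ * a₂) (by rw [if_neg (by omega : ¬ ((((j:ℤ) + 1)).toNat = (j:ℕ))), if_pos (by omega : ((((j:ℤ) + 1)) - ((j:ℤ))).natAbs = 1), if_neg (by omega : ¬ (min (((j:ℤ) + 1)).toNat (j:ℕ) = 0 ∨ max (((j:ℤ) + 1)).toNat (j:ℕ) = N - 1))]),
        key2 ((j:ℤ) + 2) (by omega) (by omega) (-a₂) (by rw [if_neg (by omega : ¬ ((((j:ℤ) + 2)).toNat = (j:ℕ))), if_neg (by omega : ¬ (((((j:ℤ) + 2)) - ((j:ℤ))).natAbs = 1)), if_pos (by omega : ((((j:ℤ) + 2)) - ((j:ℤ))).natAbs = 2)])]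
    by_cases hd0 : (i:ℕ) = (j:ℕ)
    · rw [if_pos (by omega : (i:ℕ) = (j:ℕ)),
            (by omega : ((i:ℤ) - ((j:ℤ) - 2)).natAbs = 2),
            (by omega : ((i:ℤ) - ((j:ℤ) - 1)).natAbs = 1),
            (by omega : ((i:ℤ) - ((j:ℤ))).natAbs = 0),
            (by omega : ((i:ℤ) - ((j:ℤ) + 1)).natAbs = 1),
            (by omega : ((i:ℤ) - ((j:ℤ) + 2)).natAbs = 2)]
      have g2 : r 2 = a₁ * r 1 + a₂ * r 0 := hrec 0
      rw [g2, hr0, hr1]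
      first
      | (field_simp
         ring)
      | field_simp
      | ring
    · by_cases hd1 : (i:ℕ) = (j:ℕ) + 1
      · rw [if_neg (by omega : ¬ (i:ℕ) = (j:ℕ)),
              (by omega : ((i:ℤ) - ((j:ℤ) - 2)).natAbs = 3),
              (by omega : ((i:ℤ) - ((j:ℤ) - 1)).natAbs = 2),
              (by omega : ((i:ℤ) - ((j:ℤ))).natAbs = 1),
              (by omega : ((i:ℤ) - ((j:ℤ) + 1)).natAbs = 0),
              (by omega : ((i:ℤ) - ((j:ℤ) + 2)).natAbs = 1)]
        have g2 : r 2 = a₁ * r 1 + a₂ * r 0 := hrec 0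
        have g3 : r 3 = a₁ * r 2 + a₂ * r 1 := hrec 1
        rw [g3, g2, hr0, hr1]
        first
        | (field_simp
           ring)
        | field_simp
        | ring
      · by_cases hd2 : (j:ℕ) = (i:ℕ) + 1
        · rw [if_neg (by omega : ¬ (i:ℕ) = (j:ℕ)),
                (by omega : ((i:ℤ) - ((j:ℤ) - 2)).natAbs = 1),
                (by omega : ((i:ℤ) - ((j:ℤ) - 1)).natAbs = 0),
                (by omega : ((i:ℤ) - ((j:ℤ))).natAbs = 1),
                (by omega : ((i:ℤ) - ((j:ℤ) + 1)).natAbs = 2),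
                (by omega : ((i:ℤ) - ((j:ℤ) + 2)).natAbs = 3)]
          have g2 : r 2 = a₁ * r 1 + a₂ * r 0 := hrec 0
          have g3 : r 3 = a₁ * r 2 + a₂ * r 1 := hrec 1
          rw [g3, g2, hr0, hr1]
          first
          | (field_simp
             ring)
          | field_simp
          | ring
        · by_cases hd3 : (j:ℕ) + 2 ≤ (i:ℕ)
          · obtain ⟨e, he⟩ : ∃ e, (i:ℕ) = (j:ℕ) + 2 + e := ⟨(i:ℕ) - (j:ℕ) - 2, by omega⟩
            rw [if_neg (by omega : ¬ (i:ℕ) = (j:ℕ)),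
                  (by omega : ((i:ℤ) - ((j:ℤ) - 2)).natAbs = e + 4),
                  (by omega : ((i:ℤ) - ((j:ℤ) - 1)).natAbs = e + 3),
                  (by omega : ((i:ℤ) - ((j:ℤ))).natAbs = e + 2),
                  (by omega : ((i:ℤ) - ((j:ℤ) + 1)).natAbs = e + 1),
                  (by omega : ((i:ℤ) - ((j:ℤ) + 2)).natAbs = e)]
            have g2 : r (e + 2) = a₁ * r (e + 1) + a₂ * r e := hrec e
            have g3 : r (e + 3) = a₁ * r (e + 2) + a₂ * r (e + 1) := hrec (e + 1)
            have g4 : r (e + 4) = a₁ * r (e + 3) + a₂ * r (e + 2) := hrec (e + 2)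
            rw [g4, g3, g2]
            ring
          · obtain ⟨e, he⟩ : ∃ e, (j:ℕ) = (i:ℕ) + 2 + e := ⟨(j:ℕ) - (i:ℕ) - 2, by omega⟩
            rw [if_neg (by omega : ¬ (i:ℕ) = (j:ℕ)),
                  (by omega : ((i:ℤ) - ((j:ℤ) - 2)).natAbs = e),
                  (by omega : ((i:ℤ) - ((j:ℤ) - 1)).natAbs = e + 1),
                  (by omega : ((i:ℤ) - ((j:ℤ))).natAbs = e + 2),
                  (by omega : ((i:ℤ) - ((j:ℤ) + 1)).natAbs = e + 3),
                  (by omega : ((i:ℤ) - ((j:ℤ) + 2)).natAbs = e + 4)]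
            have g2 : r (e + 2) = a₁ * r (e + 1) + a₂ * r e := hrec e
            have g3 : r (e + 3) = a₁ * r (e + 2) + a₂ * r (e + 1) := hrec (e + 1)
            have g4 : r (e + 4) = a₁ * r (e + 3) + a₂ * r (e + 2) := hrec (e + 2)
            rw [g4, g3, g2]
            ring
end

section
/- Let λ₁, λ₂ > 0 with λ₁ ≠ λ₂, and for Δ > 0 set p₁(Δ) = e^{−λ₁Δ}, p₂(Δ) = e^{−λ₂Δ}, and C(Δ) = (1 − p₂(Δ)²)p₁(Δ) / [ (1 − p₂(Δ)²)p₁(Δ) − (1 − p₁(Δ)²)p₂(Δ) ]. Then as Δ → 0⁺, C(Δ) → λ₂/(λ₂−λ₁), and moreover (C(Δ) − λ₂/(λ₂−λ₁))/Δ² → (1/6)·λ₁λ₂(λ₁+λ₂)/(λ₁−λ₂). -/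
/-!
With `p₁ = exp (-l₁ Δ)` and `p₂ = exp (-l₂ Δ)` the denominator of `C` factors as
`(p₁ - p₂) (1 + p₁ p₂)`, so `C - l₂ / (l₂ - l₁)` has numerator
`l₂ p₂ - l₁ p₁ + l₁ p₁ p₂² - l₂ p₁² p₂`, a combination of four exponentials `exp (μ Δ)`.
Their Taylor polynomials cancel up to order two, so the numerator is
`l₁ l₂ (l₁² - l₂²) Δ³ / 3 + O(Δ⁴)`, while the denominator is `2 (l₂ - l₁)² Δ + O(Δ²)`.
-/

open Filter Topology Asymptotics Real Nat

lemma exp_mul_sub_sum_range_isBigO_pow (μ : ℝ) (n : ℕ) :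
    (fun x => exp (μ * x) - ∑ i ∈ Finset.range n, (μ * x) ^ i / i !) =O[𝓝 0] (· ^ n) := by
  have hμ : Tendsto (fun x : ℝ => μ * x) (𝓝 0) (𝓝 0) := by
    simpa using (continuous_const_mul μ).tendsto 0
  refine ((exp_sub_sum_range_isBigO_pow n).comp_tendsto hμ).trans ?_
  simpa [Function.comp_def, mul_pow] using (isBigO_refl (· ^ n : ℝ → ℝ) (𝓝 0)).const_mul_left (μ ^ n)

lemma tendsto_div_pow_nhdsNE_of_isBigO {f : ℝ → ℝ} {c : ℝ} {n : ℕ}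
    (h : (fun x => f x - c * x ^ n) =O[𝓝 0] (· ^ (n + 1))) :
    Tendsto (fun x => f x / x ^ n) (𝓝[≠] 0) (𝓝 c) := by
  have hO : (fun x => f x / x ^ n - c) =O[𝓝[≠] 0] id := by
    refine ((h.mono nhdsWithin_le_nhds).mul (isBigO_refl (fun x : ℝ => (x ^ n)⁻¹) _)).congr' ?_ ?_
    all_goals filter_upwards [self_mem_nhdsWithin] with x (hx : x ≠ 0)
    · field_simp
    · field_simp
      exact pow_succ x n
  exact tendsto_sub_nhds_zero_iff.1 (hO.trans_tendsto (tendsto_id.mono_left nhdsWithin_le_nhds))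

lemma tendsto_exp_mul_sub_exp_mul_div (μ ν : ℝ) :
    Tendsto (fun x => (exp (μ * x) - exp (ν * x)) / x) (𝓝[≠] 0) (𝓝 (μ - ν)) := by
  have h := (exp_mul_sub_sum_range_isBigO_pow μ 2).sub (exp_mul_sub_sum_range_isBigO_pow ν 2)
  simpa using tendsto_div_pow_nhdsNE_of_isBigO (n := 1) (c := μ - ν)
    (f := fun x => exp (μ * x) - exp (ν * x))
    (h.congr_left fun x => by
      simp only [Finset.sum_range_succ, Finset.sum_range_zero, Nat.factorial]; push_cast; ring)

def mixingCoeff {K : Type*} [Field K] (p₁ p₂ : K) : K :=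
  (1 - p₂ ^ 2) * p₁ / ((1 - p₂ ^ 2) * p₁ - (1 - p₁ ^ 2) * p₂)

lemma mixingCoeff_sub_div {K : Type*} [Field K] {p₁ p₂ l₁ l₂ : K} (hp : p₁ ≠ p₂)
    (hp₁₂ : 1 + p₁ * p₂ ≠ 0) (hl : l₂ - l₁ ≠ 0) :
    mixingCoeff p₁ p₂ - l₂ / (l₂ - l₁) =
      (l₂ * p₂ - l₁ * p₁ + l₁ * p₁ * p₂ ^ 2 - l₂ * p₁ ^ 2 * p₂) /
        ((l₂ - l₁) * (p₁ - p₂) * (1 + p₁ * p₂)) := by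
  have hden : (1 - p₂ ^ 2) * p₁ - (1 - p₁ ^ 2) * p₂ = (p₁ - p₂) * (1 + p₁ * p₂) := by ring
  have hp' : p₁ - p₂ ≠ 0 := sub_ne_zero.2 hp
  rw [mixingCoeff, hden, div_sub_div _ _ (mul_ne_zero hp' hp₁₂) hl,
    div_eq_div_iff (mul_ne_zero (mul_ne_zero hp' hp₁₂) hl) (mul_ne_zero (mul_ne_zero hl hp') hp₁₂)]
  ring

lemma tendsto_mixingCoeff_numerator_div_cube (l₁ l₂ : ℝ) :
    Tendsto (fun x => (l₂ * exp (-l₂ * x) - l₁ * exp (-l₁ * x)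
        + l₁ * exp (-l₁ * x) * exp (-l₂ * x) ^ 2 - l₂ * exp (-l₁ * x) ^ 2 * exp (-l₂ * x)) / x ^ 3)
      (𝓝[≠] 0) (𝓝 (l₁ * l₂ * (l₁ ^ 2 - l₂ ^ 2) / 3)) := by
  have h := (((exp_mul_sub_sum_range_isBigO_pow (-l₂) 4).const_mul_left l₂).sub
    ((exp_mul_sub_sum_range_isBigO_pow (-l₁) 4).const_mul_left l₁)).add
    (((exp_mul_sub_sum_range_isBigO_pow (-(l₁ + 2 * l₂)) 4).const_mul_left l₁).sub
    ((exp_mul_sub_sum_range_isBigO_pow (-(2 * l₁ + l₂)) 4).const_mul_left l₂))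
  refine tendsto_div_pow_nhdsNE_of_isBigO (h.congr_left fun x => ?_)
  rw [show exp (-(l₁ + 2 * l₂) * x) = exp (-l₁ * x) * exp (-l₂ * x) ^ 2 by
      rw [sq, ← exp_add, ← exp_add]; ring_nf,
    show exp (-(2 * l₁ + l₂) * x) = exp (-l₁ * x) ^ 2 * exp (-l₂ * x) by
      rw [sq, ← exp_add, ← exp_add]; ring_nf]
  simp only [Finset.sum_range_succ, Finset.sum_range_zero, Nat.factorial]
  push_cast
  ring

lemma tendsto_mixingCoeff_sub_div_sq {l₁ l₂ : ℝ} (hne : l₁ ≠ l₂) :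
    Tendsto (fun Δ => (mixingCoeff (exp (-l₁ * Δ)) (exp (-l₂ * Δ)) - l₂ / (l₂ - l₁)) / Δ ^ 2)
      (𝓝[≠] 0) (𝓝 ((1 / 6) * l₁ * l₂ * (l₁ + l₂) / (l₁ - l₂))) := by
  have hl : l₂ - l₁ ≠ 0 := sub_ne_zero.2 hne.symm
  have hl' : l₁ - l₂ ≠ 0 := sub_ne_zero.2 hne
  have hdiff : Tendsto (fun x => (exp (-l₁ * x) - exp (-l₂ * x)) / x) (𝓝[≠] 0) (𝓝 (l₂ - l₁)) := by
    simpa only [neg_sub_neg] using tendsto_exp_mul_sub_exp_mul_div (-l₁) (-l₂)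
  have hprod : Tendsto (fun x => 1 + exp (-l₁ * x) * exp (-l₂ * x)) (𝓝[≠] 0) (𝓝 2) := by
    refine Tendsto.mono_left ?_ nhdsWithin_le_nhds
    convert (by fun_prop : Continuous fun x => 1 + exp (-l₁ * x) * exp (-l₂ * x)).tendsto 0 using 2
    norm_num
  have hlim := (tendsto_mixingCoeff_numerator_div_cube l₁ l₂).div
    ((hdiff.const_mul (l₂ - l₁)).mul hprod) (by simp [hl])
  convert hlim.congr' ?_ using 2
  · field_simp
    ring
  filter_upwards [self_mem_nhdsWithin] with x (hx : x ≠ 0)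
  have hp : exp (-l₁ * x) ≠ exp (-l₂ * x) := by
    simpa [exp_eq_exp, hx] using hne
  rw [Pi.div_apply, mixingCoeff_sub_div hp (by positivity) hl]
  field_simp

theorem ar2_exp_mixing_coefficient_limit_general (l₁ l₂ : ℝ)
    (hne : l₁ ≠ l₂)
    (C : ℝ → ℝ)
    (hC : ∀ Δ, C Δ = (1 - Real.exp (-l₂ * Δ) ^ 2) * Real.exp (-l₁ * Δ)
      / ((1 - Real.exp (-l₂ * Δ) ^ 2) * Real.exp (-l₁ * Δ)
        - (1 - Real.exp (-l₁ * Δ) ^ 2) * Real.exp (-l₂ * Δ))) :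
    Tendsto C (nhdsWithin 0 (Set.Ioi 0)) (nhds (l₂ / (l₂ - l₁))) ∧
    Tendsto (fun Δ => (C Δ - l₂ / (l₂ - l₁)) / Δ ^ 2) (nhdsWithin 0 (Set.Ioi 0))
      (nhds ((1 / 6) * l₁ * l₂ * (l₁ + l₂) / (l₁ - l₂))) := by
  obtain rfl : C = fun Δ => mixingCoeff (exp (-l₁ * Δ)) (exp (-l₂ * Δ)) := funext hC
  have hquot := (tendsto_mixingCoeff_sub_div_sq hne).mono_left (nhdsGT_le_nhdsNE 0)
  refine ⟨?_, hquot⟩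
  have hsq : Tendsto (fun Δ : ℝ => Δ ^ 2) (𝓝[>] 0) (𝓝 0) :=
    tendsto_nhdsWithin_of_tendsto_nhds (by simpa using (continuous_pow 2).tendsto (0 : ℝ))
  refine tendsto_sub_nhds_zero_iff.1 ?_
  have hprod := hquot.mul hsq
  rw [mul_zero] at hprod
  refine hprod.congr' ?_
  filter_upwards [self_mem_nhdsWithin] with x (hx : 0 < x)
  field_simp

/-- Limit of the mixing coefficient `C(Δ)` of the discrete AR(2) autocovariance of
exponential type: as `Δ → 0⁺`, `C(Δ) → λ₂/(λ₂-λ₁)` and moreover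
`(C(Δ) - λ₂/(λ₂-λ₁))/Δ² → (1/6) λ₁λ₂ (λ₁+λ₂)/(λ₁-λ₂)`. -/
theorem ar2_exp_mixing_coefficient_limit (l₁ l₂ : ℝ) (h₁ : 0 < l₁) (h₂ : 0 < l₂)
    (hne : l₁ ≠ l₂)
    (C : ℝ → ℝ)
    (hC : ∀ Δ, C Δ = (1 - Real.exp (-l₂ * Δ) ^ 2) * Real.exp (-l₁ * Δ)
      / ((1 - Real.exp (-l₂ * Δ) ^ 2) * Real.exp (-l₁ * Δ)
        - (1 - Real.exp (-l₁ * Δ) ^ 2) * Real.exp (-l₂ * Δ))) :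
    Tendsto C (nhdsWithin 0 (Set.Ioi 0)) (nhds (l₂ / (l₂ - l₁))) ∧
    Tendsto (fun Δ => (C Δ - l₂ / (l₂ - l₁)) / Δ ^ 2) (nhdsWithin 0 (Set.Ioi 0))
      (nhds ((1 / 6) * l₁ * l₂ * (l₁ + l₂) / (l₁ - l₂))) :=
  ar2_exp_mixing_coefficient_limit_general l₁ l₂ hne C hC
end

section
/- Let λ₁, λ₂ > 0 with λ₁ ≠ λ₂, set s₃ = 2λ₁λ₂(λ₁+λ₂), a₁(Δ) = e^{−λ₁Δ} + e^{−λ₂Δ}, a₂(Δ) = −e^{−(λ₁+λ₂)Δ}, and S(Δ) = (1+a₁−a₂)(1−a₁−a₂)(1+a₂)/(1−a₂). Let A < B and let f be twice continuously differentiable in neighborhoods of A and B with f(A) ≠ 0 and f(B) ≠ 0. Then lim_{Δ→0⁺} Δ·(f(A) − a₁(Δ) f(A+Δ) − a₂(Δ) f(A+2Δ)) / (S(Δ) f(A)) = (f''(A) − (λ₁+λ₂) f'(A) + λ₁λ₂ f(A)) / (s₃ f(A)), and lim_{Δ→0⁺} Δ·(f(B) − a₁(Δ) f(B−Δ) − a₂(Δ)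 f(B−2Δ)) / (S(Δ) f(B)) = (f''(B) + (λ₁+λ₂) f'(B) + λ₁λ₂ f(B)) / (s₃ f(B)). -/
open Filter

private lemma slope_lim {g : ℝ → ℝ} {d : ℝ} (hg : HasDerivAt g d 0) (h0 : g 0 = 0) :
    Tendsto (fun h => g h / h) (nhdsWithin 0 (Set.Ioi 0)) (nhds d) := by
  have h1 := hasDerivAt_iff_tendsto_slope.mp hg
  have hsub : nhdsWithin (0:ℝ) (Set.Ioi 0) ≤ nhdsWithin 0 {0}ᶜ :=
    nhdsWithin_mono _ (fun x hx => ne_of_gt hx)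
  refine (h1.mono_left hsub).congr (fun h => ?_)
  simp [slope_def_field, h0]

private lemma tendsto_affine (x c : ℝ) :
    Tendsto (fun h : ℝ => x + c * h) (nhdsWithin 0 (Set.Ioi 0)) (nhds x) := by
  have : Tendsto (fun h : ℝ => x + c * h) (nhds 0) (nhds (x + c * 0)) :=
    (continuous_const.add (continuous_const.mul continuous_id)).tendsto 0
  simpa using this.mono_left nhdsWithin_le_nhds

private lemma inner_deriv (x c h : ℝ) : HasDerivAt (fun h : ℝ => x + c * h) c h := by
  simpa using ((hasDerivAt_id h).const_mul c).const_add x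

private lemma inner_deriv2 (x c h : ℝ) : HasDerivAt (fun h : ℝ => x + c * (2 * h)) (c * 2) h := by
  refine (inner_deriv x (c * 2) h).congr_of_eventuallyEq ?_
  filter_upwards with h; ring_nf

private lemma second_diff {f : ℝ → ℝ} {x : ℝ} (hf : ContDiffAt ℝ 2 f x) (c : ℝ) :
    Tendsto (fun h => (f x - 2 * f (x + c * h) + f (x + c * (2 * h))) / h ^ 2)
      (nhdsWithin 0 (Set.Ioi 0)) (nhds (c ^ 2 * deriv (deriv f) x)) := by
  set D := deriv (deriv f) x with hDdef
  have hev : ∀ᶠ y in nhds x, DifferentiableAt ℝ f y :=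
    (hf.eventually (by simp)).mono (fun y hy => hy.differentiableAt (by norm_num))
  have htA2 : Tendsto (fun h : ℝ => x + c * (2 * h)) (nhdsWithin 0 (Set.Ioi 0)) (nhds x) :=
    (tendsto_affine x (c * 2)).congr (fun h => by ring_nf)
  have hd1 : ∀ᶠ h in nhdsWithin (0:ℝ) (Set.Ioi 0), DifferentiableAt ℝ f (x + c * h) :=
    (tendsto_affine x c).eventually hev
  have hd2 : ∀ᶠ h in nhdsWithin (0:ℝ) (Set.Ioi 0), DifferentiableAt ℝ f (x + c * (2 * h)) :=
    htA2.eventually hev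
  have hD : HasDerivAt (deriv f) D x := by
    obtain ⟨u, hu, hcd⟩ := hf.contDiffOn le_rfl (by simp)
    obtain ⟨t, htu, hto, hxt⟩ := mem_nhds_iff.mp hu
    have h1 : ContDiffOn ℝ 1 (deriv f) t := (hcd.mono htu).deriv_of_isOpen hto (by norm_num)
    exact ((h1.differentiableOn (by norm_num)).differentiableAt (hto.mem_nhds hxt)).hasDerivAt
  set g' : ℝ → ℝ := fun h => 0 - 2 * (deriv f (x + c * h) * c) + deriv f (x + c * (2 * h)) * (c * 2)
    with hg'def
  have hff' : ∀ᶠ h in nhdsWithin (0:ℝ) (Set.Ioi 0),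
      HasDerivAt (fun h => f x - 2 * f (x + c * h) + f (x + c * (2 * h))) (g' h) h := by
    filter_upwards [hd1, hd2] with h h1 h2
    have hc1 : HasDerivAt (fun h : ℝ => f (x + c * h)) (deriv f (x + c * h) * c) h :=
      h1.hasDerivAt.comp h (inner_deriv x c h)
    have hc2 : HasDerivAt (fun h : ℝ => f (x + c * (2 * h))) (deriv f (x + c * (2 * h)) * (c * 2)) h :=
      h2.hasDerivAt.comp h (inner_deriv2 x c h)
    exact ((hasDerivAt_const h (f x)).sub (hc1.const_mul 2)).add hc2
  have hgg' : ∀ᶠ h in nhdsWithin (0:ℝ) (Set.Ioi 0), HasDerivAt (fun h : ℝ => h ^ 2) (2 * h) h := by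
    filter_upwards with h; simpa using hasDerivAt_pow 2 h
  have hg'ne : ∀ᶠ h in nhdsWithin (0:ℝ) (Set.Ioi 0), 2 * h ≠ 0 := by
    filter_upwards [self_mem_nhdsWithin] with h hh
    exact mul_ne_zero two_ne_zero (ne_of_gt hh)
  have hfa : Tendsto (fun h => f x - 2 * f (x + c * h) + f (x + c * (2 * h)))
      (nhdsWithin (0:ℝ) (Set.Ioi 0)) (nhds 0) := by
    have t1 : Tendsto (fun h : ℝ => f (x + c * h)) (nhdsWithin 0 (Set.Ioi 0)) (nhds (f x)) :=
      hf.continuousAt.tendsto.comp (tendsto_affine x c)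
    have t2 : Tendsto (fun h : ℝ => f (x + c * (2 * h))) (nhdsWithin 0 (Set.Ioi 0)) (nhds (f x)) :=
      hf.continuousAt.tendsto.comp htA2
    have hsum : Tendsto (fun h : ℝ => f x - 2 * f (x + c * h) + f (x + c * (2 * h)))
        (nhdsWithin (0:ℝ) (Set.Ioi 0)) (nhds (f x - 2 * f x + f x)) :=
      (tendsto_const_nhds.sub (t1.const_mul 2)).add t2
    have hz : f x - 2 * f x + f x = 0 := by ring
    rwa [hz] at hsum
  have hga : Tendsto (fun h : ℝ => h ^ 2) (nhdsWithin (0:ℝ) (Set.Ioi 0)) (nhds 0) := by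
    have := ((continuous_pow 2).tendsto (0:ℝ)).mono_left
      (nhdsWithin_le_nhds (s := Set.Ioi (0:ℝ)))
    simpa using this
  have hD1 : HasDerivAt (deriv f) D (x + c * 0) := by simpa using hD
  have hD2 : HasDerivAt (deriv f) D (x + c * (2 * 0)) := by simpa using hD
  have hq1 : Tendsto (fun h => (deriv f (x + c * h) - deriv f x) / h)
      (nhdsWithin (0:ℝ) (Set.Ioi 0)) (nhds (D * c)) := by
    refine slope_lim ((hD1.comp 0 (inner_deriv x c 0)).sub_const _) (by simp)
  have hq2 : Tendsto (fun h => (deriv f (x + c * (2 * h)) - deriv f x) / h)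
      (nhdsWithin (0:ℝ) (Set.Ioi 0)) (nhds (D * (c * 2))) := by
    refine slope_lim ((hD2.comp 0 (inner_deriv2 x c 0)).sub_const _) (by simp)
  have hcomb := (hq2.const_mul c).sub (hq1.const_mul c)
  have hval : c * (D * (c * 2)) - c * (D * c) = c ^ 2 * D := by ring
  rw [hval] at hcomb
  have hdiv : Tendsto (fun h => g' h / (2 * h)) (nhdsWithin (0:ℝ) (Set.Ioi 0))
      (nhds (c ^ 2 * D)) := by
    refine hcomb.congr' ?_
    filter_upwards [self_mem_nhdsWithin] with h hh
    have hne : h ≠ 0 := ne_of_gt hh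
    rw [hg'def]
    field_simp
    ring
  exact HasDerivAt.lhopital_zero_nhdsGT hff' hgg' hg'ne hfa hga hdiv

private lemma exp_slope (l : ℝ) :
    Tendsto (fun Δ : ℝ => (1 - Real.exp (-l * Δ)) / Δ) (nhdsWithin 0 (Set.Ioi 0)) (nhds l) := by
  refine slope_lim ?_ (by simp)
  have h1 : HasDerivAt (fun Δ : ℝ => Real.exp (-l * Δ)) (Real.exp (-l * 0) * (-l * 1)) 0 :=
    (Real.hasDerivAt_exp _).comp 0 ((hasDerivAt_id (0:ℝ)).const_mul (-l))
  have h2 := h1.const_sub 1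
  simpa using h2

private lemma side_lim (l₁ l₂ : ℝ) (h₁ : 0 < l₁) (h₂ : 0 < l₂)
    (s₃ : ℝ) (hs₃ : s₃ = 2 * l₁ * l₂ * (l₁ + l₂))
    (a₁ a₂ S : ℝ → ℝ)
    (ha₁ : ∀ Δ, a₁ Δ = Real.exp (-l₁ * Δ) + Real.exp (-l₂ * Δ))
    (ha₂ : ∀ Δ, a₂ Δ = -Real.exp (-(l₁ + l₂) * Δ))
    (hS : ∀ Δ, S Δ = (1 + a₁ Δ - a₂ Δ) * (1 - a₁ Δ - a₂ Δ) * (1 + a₂ Δ) / (1 - a₂ Δ))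
    (x c : ℝ) (f : ℝ → ℝ) (hf : ContDiffAt ℝ 2 f x) (hx0 : f x ≠ 0) :
    Tendsto (fun Δ =>
        Δ * (f x - a₁ Δ * f (x + c * Δ) - a₂ Δ * f (x + c * (2 * Δ))) / (S Δ * f x))
      (nhdsWithin 0 (Set.Ioi 0))
      (nhds ((c ^ 2 * deriv (deriv f) x +
          (l₁ + l₂) * (deriv f x * c - deriv f x * (c * 2)) + l₁ * l₂ * f x) / (s₃ * f x))) := by
  have hexpadd : ∀ Δ : ℝ, Real.exp (-(l₁ + l₂) * Δ) = Real.exp (-l₁ * Δ) * Real.exp (-l₂ * Δ) := by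
    intro Δ; rw [← Real.exp_add]; congr 1; ring
  -- coefficient limits
  have L1 : Tendsto (fun Δ => (2 - a₁ Δ) / Δ) (nhdsWithin (0:ℝ) (Set.Ioi 0)) (nhds (l₁ + l₂)) :=
    ((exp_slope l₁).add (exp_slope l₂)).congr (fun Δ => by rw [ha₁]; ring)
  have L2 : Tendsto (fun Δ => (1 - a₁ Δ - a₂ Δ) / Δ ^ 2) (nhdsWithin (0:ℝ) (Set.Ioi 0))
      (nhds (l₁ * l₂)) :=
    ((exp_slope l₁).mul (exp_slope l₂)).congr (fun Δ => by rw [ha₁, ha₂, hexpadd]; ring)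
  have L3 : Tendsto (fun Δ => (1 + a₂ Δ) / Δ) (nhdsWithin (0:ℝ) (Set.Ioi 0)) (nhds (l₁ + l₂)) :=
    (exp_slope (l₁ + l₂)).congr (fun Δ => by rw [ha₂]; ring)
  have ha₂cont : Tendsto a₂ (nhdsWithin (0:ℝ) (Set.Ioi 0)) (nhds (-1)) := by
    have h : Tendsto (fun Δ : ℝ => -Real.exp (-(l₁ + l₂) * Δ)) (nhds 0)
        (nhds (-Real.exp (-(l₁ + l₂) * 0))) :=
      ((Real.continuous_exp.comp (continuous_const.mul continuous_id)).neg).tendsto 0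
    have h' := h.mono_left (nhdsWithin_le_nhds (s := Set.Ioi (0:ℝ)))
    refine (by simpa using h' : Tendsto (fun Δ : ℝ => -Real.exp (-(l₁ + l₂) * Δ))
      (nhdsWithin 0 (Set.Ioi 0)) (nhds (-1))).congr (fun Δ => (ha₂ Δ).symm)
  have ha₁cont : Tendsto a₁ (nhdsWithin (0:ℝ) (Set.Ioi 0)) (nhds 2) := by
    have h : Tendsto (fun Δ : ℝ => Real.exp (-l₁ * Δ) + Real.exp (-l₂ * Δ)) (nhds 0)
        (nhds (Real.exp (-l₁ * 0) + Real.exp (-l₂ * 0))) :=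
      ((Real.continuous_exp.comp (continuous_const.mul continuous_id)).add
        (Real.continuous_exp.comp (continuous_const.mul continuous_id))).tendsto 0
    have h' := h.mono_left (nhdsWithin_le_nhds (s := Set.Ioi (0:ℝ)))
    have h'' : Tendsto (fun Δ : ℝ => Real.exp (-l₁ * Δ) + Real.exp (-l₂ * Δ))
        (nhdsWithin 0 (Set.Ioi 0)) (nhds 2) := by
      convert h' using 2 <;> norm_num
    exact h''.congr (fun Δ => (ha₁ Δ).symm)
  -- S limit
  have hs₃ne : s₃ ≠ 0 := by rw [hs₃]; positivity
  have Slim : Tendsto (fun Δ => S Δ / Δ ^ 3) (nhdsWithin (0:ℝ) (Set.Ioi 0)) (nhds s₃) := by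
    have hnum : Tendsto (fun Δ => (1 + a₁ Δ - a₂ Δ) * ((1 - a₁ Δ - a₂ Δ) / Δ ^ 2) *
        ((1 + a₂ Δ) / Δ) / (1 - a₂ Δ)) (nhdsWithin (0:ℝ) (Set.Ioi 0))
        (nhds ((1 + 2 - (-1)) * (l₁ * l₂) * (l₁ + l₂) / (1 - (-1)))) := by
      exact ((((tendsto_const_nhds.add ha₁cont).sub ha₂cont).mul L2).mul L3).div
        (tendsto_const_nhds.sub ha₂cont) (by norm_num)
    have hval : (1 + 2 - (-1:ℝ)) * (l₁ * l₂) * (l₁ + l₂) / (1 - (-1)) = s₃ := by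
      rw [hs₃]; ring
    rw [hval] at hnum
    exact hnum.congr (fun Δ => by rw [hS]; ring)
  have SlimInv : Tendsto (fun Δ => Δ ^ 3 / S Δ) (nhdsWithin (0:ℝ) (Set.Ioi 0)) (nhds s₃⁻¹) :=
    (Slim.inv₀ hs₃ne).congr (fun Δ => by rw [inv_div])
  -- pointwise pieces for N
  have hfd : DifferentiableAt ℝ f x := hf.differentiableAt (by norm_num)
  have hfd1 : HasDerivAt f (deriv f x) (x + c * 0) := by simpa using hfd.hasDerivAt
  have hfd2 : HasDerivAt f (deriv f x) (x + c * (2 * 0)) := by simpa using hfd.hasDerivAt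
  have Tdiff : Tendsto (fun Δ => (f (x + c * Δ) - f (x + c * (2 * Δ))) / Δ)
      (nhdsWithin (0:ℝ) (Set.Ioi 0)) (nhds (deriv f x * c - deriv f x * (c * 2))) := by
    refine slope_lim ?_ (by simp)
    exact (hfd1.comp 0 (inner_deriv x c 0)).sub (hfd2.comp 0 (inner_deriv2 x c 0))
  have htA2 : Tendsto (fun Δ : ℝ => x + c * (2 * Δ)) (nhdsWithin 0 (Set.Ioi 0)) (nhds x) :=
    (tendsto_affine x (c * 2)).congr (fun h => by ring_nf)
  have Tcont : Tendsto (fun Δ : ℝ => f (x + c * (2 * Δ))) (nhdsWithin (0:ℝ) (Set.Ioi 0))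
      (nhds (f x)) := hf.continuousAt.tendsto.comp htA2
  have T1 := second_diff hf c
  -- N / Δ² limit
  have Nlim : Tendsto (fun Δ => (f x - a₁ Δ * f (x + c * Δ) - a₂ Δ * f (x + c * (2 * Δ))) / Δ ^ 2)
      (nhdsWithin (0:ℝ) (Set.Ioi 0))
      (nhds (c ^ 2 * deriv (deriv f) x +
        (l₁ + l₂) * (deriv f x * c - deriv f x * (c * 2)) + l₁ * l₂ * f x)) := by
    have hsum := (T1.add (L1.mul Tdiff)).add (L2.mul Tcont)
    exact hsum.congr (fun Δ => by ring)
  -- assemble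
  have hcomb := (Nlim.mul SlimInv).div_const (f x)
  have hvq : (c ^ 2 * deriv (deriv f) x +
      (l₁ + l₂) * (deriv f x * c - deriv f x * (c * 2)) + l₁ * l₂ * f x) * s₃⁻¹ / f x =
      (c ^ 2 * deriv (deriv f) x +
      (l₁ + l₂) * (deriv f x * c - deriv f x * (c * 2)) + l₁ * l₂ * f x) / (s₃ * f x) := by
    rw [div_eq_mul_inv, div_eq_mul_inv, mul_inv]; ring
  rw [hvq] at hcomb
  refine hcomb.congr' ?_
  · filter_upwards [self_mem_nhdsWithin] with Δ hΔ
    have hne : (Δ:ℝ) ≠ 0 := ne_of_gt hΔ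
    have h2 : (Δ:ℝ) ^ 2 ≠ 0 := pow_ne_zero _ hne
    calc (f x - a₁ Δ * f (x + c * Δ) - a₂ Δ * f (x + c * (2 * Δ))) / Δ ^ 2 * (Δ ^ 3 / S Δ) / f x
        = (Δ ^ 2 * Δ / Δ ^ 2) *
          ((f x - a₁ Δ * f (x + c * Δ) - a₂ Δ * f (x + c * (2 * Δ))) / (S Δ * f x)) := by
          rw [pow_succ]; ring
      _ = Δ * ((f x - a₁ Δ * f (x + c * Δ) - a₂ Δ * f (x + c * (2 * Δ))) / (S Δ * f x)) := by
          rw [mul_div_cancel_left₀ _ h2]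
      _ = Δ * (f x - a₁ Δ * f (x + c * Δ) - a₂ Δ * f (x + c * (2 * Δ))) / (S Δ * f x) := by
          rw [mul_div_assoc]

/-- Limits of the scaled AR(2) boundary weights of exponential type: as `Δ → 0⁺`,
`Δ(f(A) - a₁f(A+Δ) - a₂f(A+2Δ))/(S(Δ) f(A)) → Q_A` and
`Δ(f(B) - a₁f(B-Δ) - a₂f(B-2Δ))/(S(Δ) f(B)) → Q_B`, where
`Q_A = (f''(A) - (λ₁+λ₂)f'(A) + λ₁λ₂ f(A))/(s₃ f(A))` and
`Q_B = (f''(B) + (λ₁+λ₂)f'(B) + λ₁λ₂ f(B))/(s₃ f(B))` with `s₃ = 2λ₁λ₂(λ₁+λ₂)`. -/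
theorem ar2_exp_boundary_Q_limits (l₁ l₂ : ℝ) (h₁ : 0 < l₁) (h₂ : 0 < l₂) (hne : l₁ ≠ l₂)
    (s₃ : ℝ) (hs₃ : s₃ = 2 * l₁ * l₂ * (l₁ + l₂))
    (a₁ a₂ S : ℝ → ℝ)
    (ha₁ : ∀ Δ, a₁ Δ = Real.exp (-l₁ * Δ) + Real.exp (-l₂ * Δ))
    (ha₂ : ∀ Δ, a₂ Δ = -Real.exp (-(l₁ + l₂) * Δ))
    (hS : ∀ Δ, S Δ = (1 + a₁ Δ - a₂ Δ) * (1 - a₁ Δ - a₂ Δ) * (1 + a₂ Δ) / (1 - a₂ Δ))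
    (A B : ℝ) (hAB : A < B) (f : ℝ → ℝ)
    (hfA : ContDiffAt ℝ 2 f A) (hfB : ContDiffAt ℝ 2 f B)
    (hA0 : f A ≠ 0) (hB0 : f B ≠ 0) :
    Tendsto (fun Δ =>
        Δ * (f A - a₁ Δ * f (A + Δ) - a₂ Δ * f (A + 2 * Δ)) / (S Δ * f A))
      (nhdsWithin 0 (Set.Ioi 0))
      (nhds ((deriv (deriv f) A - (l₁ + l₂) * deriv f A + l₁ * l₂ * f A) / (s₃ * f A))) ∧
    Tendsto (fun Δ =>
        Δ * (f B - a₁ Δ * f (B - Δ) - a₂ Δ * f (B - 2 * Δ)) / (S Δ * f B))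
      (nhdsWithin 0 (Set.Ioi 0))
      (nhds ((deriv (deriv f) B + (l₁ + l₂) * deriv f B + l₁ * l₂ * f B) / (s₃ * f B))) := by
  constructor
  · have h := side_lim l₁ l₂ h₁ h₂ s₃ hs₃ a₁ a₂ S ha₁ ha₂ hS A 1 f hfA hA0
    have e1 : (fun Δ : ℝ =>
        Δ * (f A - a₁ Δ * f (A + 1 * Δ) - a₂ Δ * f (A + 1 * (2 * Δ))) / (S Δ * f A)) =
        (fun Δ : ℝ => Δ * (f A - a₁ Δ * f (A + Δ) - a₂ Δ * f (A + 2 * Δ)) / (S Δ * f A)) := by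
      funext Δ
      rw [show A + 1 * Δ = A + Δ by ring, show A + 1 * (2 * Δ) = A + 2 * Δ by ring]
    have e2 : ((1:ℝ) ^ 2 * deriv (deriv f) A +
        (l₁ + l₂) * (deriv f A * 1 - deriv f A * (1 * 2)) + l₁ * l₂ * f A) / (s₃ * f A) =
        (deriv (deriv f) A - (l₁ + l₂) * deriv f A + l₁ * l₂ * f A) / (s₃ * f A) := by
      ring_nf
    rw [e1, e2] at h
    exact h
  · have h := side_lim l₁ l₂ h₁ h₂ s₃ hs₃ a₁ a₂ S ha₁ ha₂ hS B (-1) f hfB hB0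
    have e1 : (fun Δ : ℝ =>
        Δ * (f B - a₁ Δ * f (B + -1 * Δ) - a₂ Δ * f (B + -1 * (2 * Δ))) / (S Δ * f B)) =
        (fun Δ : ℝ => Δ * (f B - a₁ Δ * f (B - Δ) - a₂ Δ * f (B - 2 * Δ)) / (S Δ * f B)) := by
      funext Δ
      rw [show B + -1 * Δ = B - Δ by ring, show B + -1 * (2 * Δ) = B - 2 * Δ by ring]
    have e2 : ((-1:ℝ) ^ 2 * deriv (deriv f) B +
        (l₁ + l₂) * (deriv f B * -1 - deriv f B * (-1 * 2)) + l₁ * l₂ * f B) / (s₃ * f B) =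
        (deriv (deriv f) B + (l₁ + l₂) * deriv f B + l₁ * l₂ * f B) / (s₃ * f B) := by
      ring_nf
    rw [e1, e2] at h
    exact h
end

section
/- Let λ₁, λ₂ > 0 with λ₁ ≠ λ₂, set s₃ = 2λ₁λ₂(λ₁+λ₂), a₁(Δ) = e^{−λ₁Δ} + e^{−λ₂Δ}, a₂(Δ) = −e^{−(λ₁+λ₂)Δ}, and S(Δ) = (1+a₁−a₂)(1−a₁−a₂)(1+a₂)/(1−a₂). Let A < B and let f be three times continuously differentiable in neighborhoods of A and B with f(A) ≠ 0 and f(B) ≠ 0. Define g_A(Δ) = (f(A) − a₁ f(A+Δ) − a₂ f(A+2Δ)) + (−a₁ f(A) + (1+a₁²) f(A+Δ) + (a₁a₂ − a₁) f(A+2Δ) − a₂ f(A+3Δ)) and g_B(Δ) = (f(B) − a₁ f(B−Δ) − a₂ f(B−2Δ)) + (−a₁ f(B) + (1+a₁²) f(B−Δ) + (a₁a₂ − a₁) f(B−2Δ) − a₂ f(B−3Δ)). Then lim_{Δ→0⁺} g_A(Δ)/(S(Δ) f(A)) = (f'''(A) − (λ₁² + λ₁λ₂ + λ₂²) f'(A)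 + λ₁λ₂(λ₁+λ₂) f(A)) / (s₃ f(A)), and lim_{Δ→0⁺} g_B(Δ)/(S(Δ) f(B)) = (−f'''(B) + (λ₁² + λ₁λ₂ + λ₂²) f'(B) + λ₁λ₂(λ₁+λ₂) f(B)) / (s₃ f(B)). -/
/-!
Write `u = e^{-λ₁Δ}` and `v = e^{-λ₂Δ}`, so that `a₁ = u + v` and `a₂ = -uv`. Then
`g_A(Δ) = ∑_{k=0}^{3} c_k f(A + kΔ)`, where the generating polynomial of the stencil factors as
`∑ c_k z^k = (1 - a₁z - a₂z²)(1 - a₁ + z) = (1 - uz)(1 - vz)(1 - u - v + z)`. Since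
`1 - u ≈ λ₁Δ` and `1 - v ≈ λ₂Δ`, its moments `∑ c_k k^j` are `O(Δ^{3-j})`, and `Δ^{j-3} ∑ c_k k^j`
tends to `j!` times the coefficient of `x^j` in `(λ₁ - x)(λ₂ - x)(λ₁ + λ₂ + x)`, namely
`λ₁λ₂(λ₁+λ₂), -(λ₁²+λ₁λ₂+λ₂²), 0, 6`. Expanding `f` to third order with a Peano remainder gives
`g_A(Δ)/Δ³ → f'''(A) - (λ₁²+λ₁λ₂+λ₂²) f'(A) + λ₁λ₂(λ₁+λ₂) f(A)`, while
`S(Δ) = (1+u)(1+v)(1-u)(1-v)(1-uv)/(1+uv)` satisfies `S(Δ)/Δ³ → s₃`. The right boundary is the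
left one for `x ↦ f(-x)` at `-B`.
-/

open Filter Topology Finset Asymptotics
open scoped Nat

theorem ContDiffAt.isLittleO_taylor {f : ℝ → ℝ} {x : ℝ} {n : ℕ} (hf : ContDiffAt ℝ n f x) :
    (fun h => f (x + h) - ∑ k ∈ range (n + 1), iteratedDeriv k f x / k ! * h ^ k)
      =o[𝓝 0] fun h => h ^ n := by
  obtain ⟨u, hu, hfu⟩ := hf.contDiffOn le_rfl (by simp)
  obtain ⟨r, hr, hball⟩ := Metric.mem_nhds_iff.mp hu
  have htaylor := taylor_isLittleO (convex_ball x r) (Metric.mem_ball_self hr) (hfu.mono hball)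
  rw [nhdsWithin_eq_nhds.mpr (Metric.ball_mem_nhds x hr)] at htaylor
  have hshift : Tendsto (fun h : ℝ => x + h) (𝓝 0) (𝓝 x) := by
    simpa using (continuous_const_add x).tendsto 0
  refine (htaylor.comp_tendsto hshift).congr (fun h => ?_) (fun h => by simp)
  simp only [Function.comp_apply, taylor_within_apply, add_sub_cancel_left, smul_eq_mul,
    iteratedDerivWithin_of_isOpen Metric.isOpen_ball (Metric.mem_ball_self hr)]
  congr 1
  exact sum_congr rfl fun k _ => by ring

theorem tendsto_sum_mul_apply_add_div_pow {α : Type*} {l : Filter α} {f : ℝ → ℝ} {x : ℝ}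
    {n m : ℕ} (hf : ContDiffAt ℝ n f x) {t : α → ℝ} (ht : Tendsto t l (𝓝 0))
    (ht0 : ∀ᶠ a in l, t a ≠ 0) {c : ℕ → α → ℝ} (hc : ∀ k ∈ range m, c k =O[l] fun _ => (1 : ℝ))
    {M : ℕ → ℝ}
    (hM : ∀ j ∈ range (n + 1),
      Tendsto (fun a => (∑ k ∈ range m, c k a * k ^ j) / t a ^ (n - j)) l (𝓝 (M j))) :
    Tendsto (fun a => (∑ k ∈ range m, c k a * f (x + k * t a)) / t a ^ n) l
      (𝓝 (∑ j ∈ range (n + 1), M j * (iteratedDeriv j f x / j !))) := by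
  set T : ℝ → ℝ := fun h => ∑ j ∈ range (n + 1), iteratedDeriv j f x / j ! * h ^ j
  have hnode (k : ℕ) : (fun a => f (x + k * t a) - T (k * t a)) =o[l] fun a => t a ^ n := by
    have hkt : Tendsto (fun a => (k : ℝ) * t a) l (𝓝 0) := by simpa using ht.const_mul (k : ℝ)
    refine (hf.isLittleO_taylor.comp_tendsto hkt).trans_isBigO ?_
    exact IsBigO.of_bound ((k : ℝ) ^ n) (Eventually.of_forall fun a => by
      simp [mul_pow])
  have herr : (fun a => ∑ k ∈ range m, c k a * (f (x + k * t a) - T (k * t a)))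
      =o[l] fun a => t a ^ n :=
    IsLittleO.fun_sum fun k hk => by simpa using (hc k hk).mul_isLittleO (hnode k)
  have hmain := tendsto_finsetSum (range (n + 1)) fun j hj =>
    (hM j hj).mul_const (iteratedDeriv j f x / j !)
  have hsplit : ∀ᶠ a in l,
      ∑ j ∈ range (n + 1), (∑ k ∈ range m, c k a * k ^ j) / t a ^ (n - j)
          * (iteratedDeriv j f x / j !)
        + (∑ k ∈ range m, c k a * (f (x + k * t a) - T (k * t a))) / t a ^ n
      = (∑ k ∈ range m, c k a * f (x + k * t a)) / t a ^ n := by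
    filter_upwards [ht0] with a ha
    have hpoly : ∑ j ∈ range (n + 1), (∑ k ∈ range m, c k a * k ^ j) / t a ^ (n - j)
        * (iteratedDeriv j f x / j !) = (∑ k ∈ range m, c k a * T (k * t a)) / t a ^ n := by
      rw [eq_div_iff (pow_ne_zero n ha), sum_mul]
      simp only [T, mul_sum]
      rw [sum_comm]
      refine sum_congr rfl fun j hj => ?_
      rw [← pow_sub_mul_pow (t a) (Nat.lt_succ_iff.mp (mem_range.mp hj))]
      calc _ = (∑ k ∈ range m, c k a * k ^ j) * (iteratedDeriv j f x / j !) * t a ^ j := by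
            field_simp
        _ = _ := by
            rw [sum_mul, sum_mul]
            exact sum_congr rfl fun k _ => by ring
    rw [hpoly, ← add_div, ← sum_add_distrib]
    simp only [mul_sub, add_sub_cancel]
  simpa using (hmain.add herr.tendsto_div_nhds_zero).congr' hsplit

noncomputable def expRate (l Δ : ℝ) : ℝ := (1 - Real.exp (-l * Δ)) / Δ

theorem tendsto_expRate (l : ℝ) : Tendsto (expRate l) (𝓝[≠] 0) (𝓝 l) := by
  have h : HasDerivAt (fun Δ => 1 - Real.exp (-l * Δ)) l 0 := by
    simpa using (((hasDerivAt_id (0 : ℝ)).const_mul (-l)).exp).const_sub 1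
  refine (hasDerivAt_iff_tendsto_slope.mp h).congr fun Δ => ?_
  simp [slope_def_field, expRate]

theorem exp_neg_mul_eq_one_sub_expRate_mul {l Δ : ℝ} (hΔ : Δ ≠ 0) :
    Real.exp (-l * Δ) = 1 - expRate l Δ * Δ := by
  rw [expRate, div_mul_cancel₀ _ hΔ]
  ring

theorem tendsto_comp_expRate {l₁ l₂ : ℝ} {Φ : ℝ × ℝ × ℝ → ℝ} (hΦ : ContinuousAt Φ (l₁, l₂, 0)) :
    Tendsto (fun Δ => Φ (expRate l₁ Δ, expRate l₂ Δ, Δ)) (𝓝[≠] 0) (𝓝 (Φ (l₁, l₂, 0))) :=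
  hΦ.tendsto.comp <| (tendsto_expRate l₁).prodMk_nhds <|
    (tendsto_expRate l₂).prodMk_nhds nhdsWithin_le_nhds

noncomputable def ar2Coeff₁ (l₁ l₂ Δ : ℝ) : ℝ := Real.exp (-l₁ * Δ) + Real.exp (-l₂ * Δ)

noncomputable def ar2Coeff₂ (l₁ l₂ Δ : ℝ) : ℝ := -Real.exp (-(l₁ + l₂) * Δ)

theorem ar2Coeff₁_eq_expRate {l₁ l₂ Δ : ℝ} (hΔ : Δ ≠ 0) :
    ar2Coeff₁ l₁ l₂ Δ = (1 - expRate l₁ Δ * Δ) + (1 - expRate l₂ Δ * Δ) := by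
  rw [ar2Coeff₁, exp_neg_mul_eq_one_sub_expRate_mul hΔ, exp_neg_mul_eq_one_sub_expRate_mul hΔ]

theorem ar2Coeff₂_eq_expRate {l₁ l₂ Δ : ℝ} (hΔ : Δ ≠ 0) :
    ar2Coeff₂ l₁ l₂ Δ = -((1 - expRate l₁ Δ * Δ) * (1 - expRate l₂ Δ * Δ)) := by
  rw [ar2Coeff₂, ← exp_neg_mul_eq_one_sub_expRate_mul hΔ, ← exp_neg_mul_eq_one_sub_expRate_mul hΔ,
    ← Real.exp_add]
  ring_nf

theorem continuous_ar2Coeffs (l₁ l₂ : ℝ) :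
    Continuous fun Δ => (ar2Coeff₁ l₁ l₂ Δ, ar2Coeff₂ l₁ l₂ Δ) := by
  unfold ar2Coeff₁ ar2Coeff₂
  fun_prop

def boundaryStencil (a₁ a₂ : ℝ) : ℕ → ℝ
  | 0 => 1 - a₁
  | 1 => 1 - a₁ + a₁ ^ 2
  | 2 => a₁ * a₂ - a₁ - a₂
  | 3 => -a₂
  | _ => 0

theorem continuous_boundaryStencil (k : ℕ) :
    Continuous fun a : ℝ × ℝ => boundaryStencil a.1 a.2 k := by
  rcases k with _ | _ | _ | _ | k <;> simp only [boundaryStencil] <;> fun_prop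

def boundaryMoment : ℕ → ℝ → ℝ → ℝ → ℝ
  | 0, p, q, _ => p * q * (p + q)
  | 1, p, q, Δ => p * q - ((1 - p * Δ) * q + (1 - q * Δ) * p) * (p + q)
  | 2, p, q, Δ => 2 * ((1 - p * Δ) * (1 - q * Δ) * (p + q) - (1 - p * Δ) * q - (1 - q * Δ) * p)
      + Δ * (p * q - ((1 - p * Δ) * q + (1 - q * Δ) * p) * (p + q))
  | 3, p, q, Δ => ∑ k ∈ range 4,
      boundaryStencil ((1 - p * Δ) + (1 - q * Δ)) (-((1 - p * Δ) * (1 - q * Δ))) k * k ^ 3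
  | _, _, _, _ => 0

theorem continuous_boundaryMoment (j : ℕ) :
    Continuous fun y : ℝ × ℝ × ℝ => boundaryMoment j y.1 y.2.1 y.2.2 := by
  rcases j with _ | _ | _ | _ | j <;>
    simp only [boundaryMoment, sum_range_succ, sum_range_zero, boundaryStencil] <;> fun_prop

theorem sum_boundaryStencil_mul_pow {j : ℕ} (hj : j < 4) (p q Δ : ℝ) :
    ∑ k ∈ range 4,
      boundaryStencil ((1 - p * Δ) + (1 - q * Δ)) (-((1 - p * Δ) * (1 - q * Δ))) k * k ^ j
      = Δ ^ (3 - j) * boundaryMoment j p q Δ := by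
  interval_cases j <;>
    simp only [sum_range_succ, sum_range_zero, boundaryStencil, boundaryMoment, Nat.cast_zero,
      Nat.cast_one, Nat.cast_ofNat] <;> ring

theorem tendsto_sum_boundaryStencil_div_cube (l₁ l₂ : ℝ) {f : ℝ → ℝ} {x : ℝ}
    (hf : ContDiffAt ℝ 3 f x) :
    Tendsto (fun Δ => (∑ k ∈ range 4,
        boundaryStencil (ar2Coeff₁ l₁ l₂ Δ) (ar2Coeff₂ l₁ l₂ Δ) k * f (x + k * Δ)) / Δ ^ 3)
      (𝓝[≠] 0) (𝓝 (iteratedDeriv 3 f x - (l₁ ^ 2 + l₁ * l₂ + l₂ ^ 2) * deriv f x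
        + l₁ * l₂ * (l₁ + l₂) * f x)) := by
  have hc (k : ℕ) (_ : k ∈ range 4) :
      (fun Δ => boundaryStencil (ar2Coeff₁ l₁ l₂ Δ) (ar2Coeff₂ l₁ l₂ Δ) k)
        =O[𝓝[≠] 0] fun _ => (1 : ℝ) :=
    ((((continuous_boundaryStencil k).comp (continuous_ar2Coeffs l₁ l₂)).tendsto 0).mono_left
      nhdsWithin_le_nhds).isBigO_one ℝ
  have hM (j : ℕ) (hj : j ∈ range (3 + 1)) : Tendsto (fun Δ => (∑ k ∈ range 4,
      boundaryStencil (ar2Coeff₁ l₁ l₂ Δ) (ar2Coeff₂ l₁ l₂ Δ) k * k ^ j) / Δ ^ (3 - j))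
      (𝓝[≠] 0) (𝓝 (boundaryMoment j l₁ l₂ 0)) := by
    refine (tendsto_comp_expRate (continuous_boundaryMoment j).continuousAt).congr' ?_
    filter_upwards [self_mem_nhdsWithin] with Δ hΔ
    rw [ar2Coeff₁_eq_expRate hΔ, ar2Coeff₂_eq_expRate hΔ,
      sum_boundaryStencil_mul_pow (mem_range.mp hj),
      mul_div_cancel_left₀ _ (pow_ne_zero _ hΔ)]
  have hlim : ∑ j ∈ range (3 + 1), boundaryMoment j l₁ l₂ 0 * (iteratedDeriv j f x / j !)
      = iteratedDeriv 3 f x - (l₁ ^ 2 + l₁ * l₂ + l₂ ^ 2) * deriv f x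
        + l₁ * l₂ * (l₁ + l₂) * f x := by
    simp only [sum_range_succ, sum_range_zero, boundaryMoment, boundaryStencil, iteratedDeriv_zero,
      iteratedDeriv_one, Nat.factorial, Nat.cast_zero, Nat.cast_ofNat, Nat.cast_succ]
    ring
  simpa [hlim] using tendsto_sum_mul_apply_add_div_pow (l := 𝓝[≠] 0) (t := fun Δ => Δ) hf
    (tendsto_id.mono_left nhdsWithin_le_nhds) self_mem_nhdsWithin hc hM

noncomputable def ar2Scale (a₁ a₂ : ℝ) : ℝ := (1 + a₁ - a₂) * (1 - a₁ - a₂) * (1 + a₂) / (1 - a₂)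

theorem tendsto_ar2Scale_div_cube (l₁ l₂ : ℝ) :
    Tendsto (fun Δ => ar2Scale (ar2Coeff₁ l₁ l₂ Δ) (ar2Coeff₂ l₁ l₂ Δ) / Δ ^ 3) (𝓝[≠] 0)
      (𝓝 (2 * l₁ * l₂ * (l₁ + l₂))) := by
  set Φ : ℝ × ℝ × ℝ → ℝ := fun y => (2 - y.1 * y.2.2) * (2 - y.2.1 * y.2.2) * y.1 * y.2.1
    * (y.1 + y.2.1 - y.1 * y.2.1 * y.2.2) / (1 + (1 - y.1 * y.2.2) * (1 - y.2.1 * y.2.2))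
  -- `Φ (p, q, Δ) = ar2Scale (u + v) (-(u * v)) / Δ ^ 3` for `u = 1 - pΔ`, `v = 1 - qΔ`
  have hΦ : ContinuousAt Φ (l₁, l₂, 0) := by fun_prop (disch := norm_num)
  convert (tendsto_comp_expRate hΦ).congr' ?_ using 2
  · simp only [Φ]
    ring
  filter_upwards [self_mem_nhdsWithin] with Δ (hΔ : Δ ≠ 0)
  have hden : 1 + (1 - expRate l₁ Δ * Δ) * (1 - expRate l₂ Δ * Δ) ≠ 0 := by
    rw [← exp_neg_mul_eq_one_sub_expRate_mul hΔ, ← exp_neg_mul_eq_one_sub_expRate_mul hΔ]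
    positivity
  rw [ar2Scale, ar2Coeff₁_eq_expRate hΔ, ar2Coeff₂_eq_expRate hΔ]
  simp only [Φ]
  field_simp
  ring

theorem tendsto_sum_boundaryStencil_div_ar2Scale {l₁ l₂ : ℝ} (h₁ : 0 < l₁) (h₂ : 0 < l₂)
    {f : ℝ → ℝ} {x : ℝ} (hf : ContDiffAt ℝ 3 f x) (hx : f x ≠ 0) :
    Tendsto (fun Δ => (∑ k ∈ range 4,
        boundaryStencil (ar2Coeff₁ l₁ l₂ Δ) (ar2Coeff₂ l₁ l₂ Δ) k * f (x + k * Δ))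
          / (ar2Scale (ar2Coeff₁ l₁ l₂ Δ) (ar2Coeff₂ l₁ l₂ Δ) * f x))
      (𝓝[≠] 0) (𝓝 ((iteratedDeriv 3 f x - (l₁ ^ 2 + l₁ * l₂ + l₂ ^ 2) * deriv f x
        + l₁ * l₂ * (l₁ + l₂) * f x) / (2 * l₁ * l₂ * (l₁ + l₂) * f x))) := by
  refine ((tendsto_sum_boundaryStencil_div_cube l₁ l₂ hf).div
    ((tendsto_ar2Scale_div_cube l₁ l₂).mul_const (f x)) (mul_ne_zero (by positivity) hx)).congr' ?_
  filter_upwards [self_mem_nhdsWithin] with Δ (hΔ : Δ ≠ 0)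
  rw [Pi.div_apply, div_mul_eq_mul_div, div_div_div_cancel_right₀ (pow_ne_zero 3 hΔ)]

theorem ar2_exp_boundary_P_limits_general (l₁ l₂ : ℝ) (h₁ : 0 < l₁) (h₂ : 0 < l₂)
    (s₃ : ℝ) (hs₃ : s₃ = 2 * l₁ * l₂ * (l₁ + l₂))
    (a₁ a₂ S : ℝ → ℝ)
    (ha₁ : ∀ Δ, a₁ Δ = Real.exp (-l₁ * Δ) + Real.exp (-l₂ * Δ))
    (ha₂ : ∀ Δ, a₂ Δ = -Real.exp (-(l₁ + l₂) * Δ))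
    (hS : ∀ Δ, S Δ = (1 + a₁ Δ - a₂ Δ) * (1 - a₁ Δ - a₂ Δ) * (1 + a₂ Δ) / (1 - a₂ Δ))
    (A B : ℝ) (f : ℝ → ℝ)
    (hfA : ContDiffAt ℝ 3 f A) (hfB : ContDiffAt ℝ 3 f B)
    (hA0 : f A ≠ 0) (hB0 : f B ≠ 0)
    (gA gB : ℝ → ℝ)
    (hgA : ∀ Δ, gA Δ = (f A - a₁ Δ * f (A + Δ) - a₂ Δ * f (A + 2 * Δ))
      + (-(a₁ Δ) * f A + (1 + (a₁ Δ) ^ 2) * f (A + Δ)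
          + (a₁ Δ * a₂ Δ - a₁ Δ) * f (A + 2 * Δ) - a₂ Δ * f (A + 3 * Δ)))
    (hgB : ∀ Δ, gB Δ = (f B - a₁ Δ * f (B - Δ) - a₂ Δ * f (B - 2 * Δ))
      + (-(a₁ Δ) * f B + (1 + (a₁ Δ) ^ 2) * f (B - Δ)
          + (a₁ Δ * a₂ Δ - a₁ Δ) * f (B - 2 * Δ) - a₂ Δ * f (B - 3 * Δ))) :
    Tendsto (fun Δ => gA Δ / (S Δ * f A)) (nhdsWithin 0 (Set.Ioi 0))
      (nhds ((deriv (deriv (deriv f)) A - (l₁ ^ 2 + l₁ * l₂ + l₂ ^ 2) * deriv f A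
        + l₁ * l₂ * (l₁ + l₂) * f A) / (s₃ * f A))) ∧
    Tendsto (fun Δ => gB Δ / (S Δ * f B)) (nhdsWithin 0 (Set.Ioi 0))
      (nhds ((-deriv (deriv (deriv f)) B + (l₁ ^ 2 + l₁ * l₂ + l₂ ^ 2) * deriv f B
        + l₁ * l₂ * (l₁ + l₂) * f B) / (s₃ * f B))) := by
  obtain rfl : a₁ = ar2Coeff₁ l₁ l₂ := funext ha₁
  obtain rfl : a₂ = ar2Coeff₂ l₁ l₂ := funext ha₂
  obtain rfl : S = fun Δ => ar2Scale (ar2Coeff₁ l₁ l₂ Δ) (ar2Coeff₂ l₁ l₂ Δ) := funext hS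
  subst hs₃
  have hA := tendsto_sum_boundaryStencil_div_ar2Scale h₁ h₂ hfA hA0
  have hB := tendsto_sum_boundaryStencil_div_ar2Scale h₁ h₂ (f := fun y => f (-y)) (x := -B)
    (by rw [← neg_neg B] at hfB; exact hfB.comp (-B) contDiff_neg.contDiffAt) (by simpa using hB0)
  simp only [iteratedDeriv_comp_neg, deriv_comp_neg, neg_neg] at hB
  have h3 : iteratedDeriv 3 f = deriv (deriv (deriv f)) := by simp [iteratedDeriv_succ]
  rw [h3] at hA hB
  constructor
  · refine (hA.mono_left (nhdsGT_le_nhdsNE 0)).congr fun Δ => ?_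
    rw [hgA]
    congr 1
    simp only [sum_range_succ, sum_range_zero, boundaryStencil, Nat.cast_zero, Nat.cast_one,
      Nat.cast_ofNat, zero_mul, one_mul, add_zero]
    ring
  · convert hB.mono_left (nhdsGT_le_nhdsNE 0) using 2 with Δ
    · rw [hgB]
      congr 1
      simp only [sum_range_succ, sum_range_zero, boundaryStencil, Nat.cast_zero, Nat.cast_one,
        Nat.cast_ofNat, zero_mul, one_mul, neg_add_eq_sub, neg_sub, sub_zero]
      ring
    · simp only [smul_eq_mul]
      ring

/-- Limits identifying the boundary masses `P_A` and `P_B` of the continuous approximate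
design for AR(2) errors of exponential type: with `g_A(Δ)` and `g_B(Δ)` the sums of the
two leftmost (resp. rightmost) unnormalized optimal weights, as `Δ → 0⁺`,
`g_A(Δ)/(S(Δ) f(A)) → (f'''(A) - (λ₁²+λ₁λ₂+λ₂²)f'(A) + λ₁λ₂(λ₁+λ₂)f(A))/(s₃ f(A))` and
`g_B(Δ)/(S(Δ) f(B)) → (-f'''(B) + (λ₁²+λ₁λ₂+λ₂²)f'(B) + λ₁λ₂(λ₁+λ₂)f(B))/(s₃ f(B))`. -/
theorem ar2_exp_boundary_P_limits (l₁ l₂ : ℝ) (h₁ : 0 < l₁) (h₂ : 0 < l₂) (hne : l₁ ≠ l₂)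
    (s₃ : ℝ) (hs₃ : s₃ = 2 * l₁ * l₂ * (l₁ + l₂))
    (a₁ a₂ S : ℝ → ℝ)
    (ha₁ : ∀ Δ, a₁ Δ = Real.exp (-l₁ * Δ) + Real.exp (-l₂ * Δ))
    (ha₂ : ∀ Δ, a₂ Δ = -Real.exp (-(l₁ + l₂) * Δ))
    (hS : ∀ Δ, S Δ = (1 + a₁ Δ - a₂ Δ) * (1 - a₁ Δ - a₂ Δ) * (1 + a₂ Δ) / (1 - a₂ Δ))
    (A B : ℝ) (hAB : A < B) (f : ℝ → ℝ)
    (hfA : ContDiffAt ℝ 3 f A) (hfB : ContDiffAt ℝ 3 f B)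
    (hA0 : f A ≠ 0) (hB0 : f B ≠ 0)
    (gA gB : ℝ → ℝ)
    (hgA : ∀ Δ, gA Δ = (f A - a₁ Δ * f (A + Δ) - a₂ Δ * f (A + 2 * Δ))
      + (-(a₁ Δ) * f A + (1 + (a₁ Δ) ^ 2) * f (A + Δ)
          + (a₁ Δ * a₂ Δ - a₁ Δ) * f (A + 2 * Δ) - a₂ Δ * f (A + 3 * Δ)))
    (hgB : ∀ Δ, gB Δ = (f B - a₁ Δ * f (B - Δ) - a₂ Δ * f (B - 2 * Δ))
      + (-(a₁ Δ) * f B + (1 + (a₁ Δ) ^ 2) * f (B - Δ)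
          + (a₁ Δ * a₂ Δ - a₁ Δ) * f (B - 2 * Δ) - a₂ Δ * f (B - 3 * Δ))) :
    Tendsto (fun Δ => gA Δ / (S Δ * f A)) (nhdsWithin 0 (Set.Ioi 0))
      (nhds ((deriv (deriv (deriv f)) A - (l₁ ^ 2 + l₁ * l₂ + l₂ ^ 2) * deriv f A
        + l₁ * l₂ * (l₁ + l₂) * f A) / (s₃ * f A))) ∧
    Tendsto (fun Δ => gB Δ / (S Δ * f B)) (nhdsWithin 0 (Set.Ioi 0))
      (nhds ((-deriv (deriv (deriv f)) B + (l₁ ^ 2 + l₁ * l₂ + l₂ ^ 2) * deriv f B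
        + l₁ * l₂ * (l₁ + l₂) * f B) / (s₃ * f B))) :=
  ar2_exp_boundary_P_limits_general l₁ l₂ h₁ h₂ s₃ hs₃ a₁ a₂ S ha₁ ha₂ hS A B f hfA hfB hA0 hB0 gA
    gB hgA hgB
end
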